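/- arXiv:1503.09108 — 8 statements merged into one kernel-verified Lean document; each statement's English description precedes it below -/
import Mathlib

section
/- Let n ≥ 1, let F be a C^∞ function on an open set Ω ⊆ ℝ^{n+1}, and let p ∈ Ω be a regular point of F (∇F(p) ≠ 0). Set E := −|∇F(p)|⁻¹∇F(p), H := Hess F(p), and define the (n+1)×(n+1) matrix Π := |∇F(p)|⁻¹ ( H − (HE)Eᵀ − E(HE)ᵀ + (EᵀHE)·EEᵀ ). Then ΠE = 0 and det(Π + EEᵀ) · |∇F(p)|^{n+2} = U(F)(p). (The restriction of Π to the tangent hyperplane ker dF(p) of the level set of F through p is the second fundamental form of the level set with respect to the Euclidean unit normal E, so det(Π + EEᵀ) is the Gauss–Kronecker curvature K of the level set at p, and the identity reads U(F) = K·|∇F|^{n+2}.) -/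
open Matrix

noncomputable def pd1 {ι : Type*} [Fintype ι] [DecidableEq ι]
    (F : (ι → ℝ) → ℝ) (i : ι) (x : ι → ℝ) : ℝ :=
  fderiv ℝ F x (Pi.single i 1)

noncomputable def gradv {ι : Type*} [Fintype ι] [DecidableEq ι]
    (F : (ι → ℝ) → ℝ) (x : ι → ℝ) : ι → ℝ :=
  fun i => pd1 F i x

noncomputable def hessM {ι : Type*} [Fintype ι] [DecidableEq ι]
    (F : (ι → ℝ) → ℝ) (x : ι → ℝ) : Matrix ι ι ℝ :=
  Matrix.of fun i j => pd1 (pd1 F j) i x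

noncomputable def Hdet {ι : Type*} [Fintype ι] [DecidableEq ι]
    (F : (ι → ℝ) → ℝ) (x : ι → ℝ) : ℝ :=
  (hessM F x).det

noncomputable def Nvec {ι : Type*} [Fintype ι] [DecidableEq ι]
    (F : (ι → ℝ) → ℝ) (x : ι → ℝ) : ι → ℝ :=
  (hessM F x).adjugate *ᵥ gradv F x

noncomputable def Uval {ι : Type*} [Fintype ι] [DecidableEq ι]
    (F : (ι → ℝ) → ℝ) (x : ι → ℝ) : ℝ :=
  gradv F x ⬝ᵥ Nvec F x

/-! With `t := |∇F(p)|` and `c := Eᵀ H E`, the matrix `Y := H + (t E - H E) Eᵀ` satisfies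
`Y E = t E`, so `t Π + t E Eᵀ = Y (1 - t⁻¹ E rᵀ)` with `r := H E - c E ⊥ E`, and the second factor has
determinant `1`. The matrix determinant lemma gives `det Y = t · Eᵀ adj(H) E`, while
`∇F(p) = -t E` gives `U(F)(p) = t² · Eᵀ adj(H) E`. -/

namespace Matrix

variable {ι : Type*} [Fintype ι]

section CommRing

variable {R : Type*} [CommRing R]

theorem vecMulVec_mulVec' (u v w : ι → R) : vecMulVec u v *ᵥ w = (v ⬝ᵥ w) • u := by
  rw [vecMulVec_mulVec, op_smul_eq_smul]

variable [DecidableEq ι]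

theorem det_one_add_vecMulVec (u v : ι → R) : (1 + vecMulVec u v).det = 1 + v ⬝ᵥ u := by
  rw [vecMulVec_eq Unit, det_one_add_replicateCol_mul_replicateRow]

theorem det_add_vecMulVec_of_isUnit {A : Matrix ι ι R} (hA : IsUnit A.det) (u v : ι → R) :
    (A + vecMulVec u v).det = A.det + v ⬝ᵥ (A.adjugate *ᵥ u) := by
  have hAA : A * A⁻¹ = 1 := mul_nonsing_inv A hA
  calc (A + vecMulVec u v).det = (A * (1 + vecMulVec (A⁻¹ *ᵥ u) v)).det := by
        rw [Matrix.mul_add, mul_vecMulVec, mulVec_mulVec, hAA, one_mulVec, Matrix.mul_one]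
    _ = A.det + v ⬝ᵥ (A.adjugate *ᵥ u) := by
        rw [det_mul, det_one_add_vecMulVec, mul_add, mul_one, ← cramer_eq_adjugate_mulVec,
          ← det_smul_inv_mulVec_eq_cramer A u hA, dotProduct_smul, smul_eq_mul]

end CommRing

section Field

variable [DecidableEq ι] {𝕜 : Type*} [NontriviallyNormedField 𝕜] [CompleteSpace 𝕜]

theorem dense_setOf_isUnit_det_add_scalar (A : Matrix ι ι 𝕜) :
    Dense {t : 𝕜 | IsUnit (A + scalar ι t).det} := by
  have hroots : {t : 𝕜 | (-A).charpoly.IsRoot t}.Finite :=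
    Polynomial.finite_setOfPred_isRoot (-A).charpoly_monic.ne_zero
  refine (hroots.countable.dense_compl 𝕜).mono fun t ht => ?_
  rw [Set.mem_ofPred_eq, isUnit_iff_ne_zero, add_comm, ← sub_neg_eq_add, ← eval_charpoly]
  exact ht

theorem det_add_vecMulVec (A : Matrix ι ι 𝕜) (u v : ι → 𝕜) :
    (A + vecMulVec u v).det = A.det + v ⬝ᵥ (A.adjugate *ᵥ u) := by
  have hpath : Continuous fun t : 𝕜 => A + scalar ι t := by
    simp only [scalar_apply]
    exact continuous_const.add (continuous_pi fun _ => continuous_id).matrix_diagonal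
  have hfun := Continuous.ext_on (dense_setOf_isUnit_det_add_scalar A)
    (hpath.add continuous_const).matrix_det
    (hpath.matrix_det.add (continuous_const.dotProduct
      (hpath.matrix_adjugate.matrix_mulVec continuous_const)))
    fun t ht => det_add_vecMulVec_of_isUnit ht u v
  simpa using congrFun hfun 0

end Field

end Matrix

section TangentialHessian

variable {ι : Type*} [Fintype ι]

/-- For symmetric `H` and unit `E` this is `(1 - E Eᵀ) H (1 - E Eᵀ)`; the paper's `Π` is
`|∇F(p)|⁻¹ • tangentialHessian (Hess F(p)) E`. -/
def tangentialHessian {R : Type*} [CommRing R] (H : Matrix ι ι R) (E : ι → R) : Matrix ι ι R :=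
  H - vecMulVec (H *ᵥ E) E - vecMulVec E (H *ᵥ E) + (E ⬝ᵥ (H *ᵥ E)) • vecMulVec E E

theorem tangentialHessian_mulVec_self {R : Type*} [CommRing R] {H : Matrix ι ι R} {E : ι → R}
    (hE : E ⬝ᵥ E = 1) : tangentialHessian H E *ᵥ E = 0 := by
  rw [tangentialHessian, add_mulVec, sub_mulVec, sub_mulVec, smul_mulVec, vecMulVec_mulVec',
    vecMulVec_mulVec', vecMulVec_mulVec', hE, one_smul, one_smul, dotProduct_comm (H *ᵥ E) E,
    sub_self, zero_sub, neg_add_cancel]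

variable [DecidableEq ι] {𝕜 : Type*} [NontriviallyNormedField 𝕜] [CompleteSpace 𝕜]

theorem det_add_vecMulVec_smul_sub_mulVec (H : Matrix ι ι 𝕜) {E : ι → 𝕜} (hE : E ⬝ᵥ E = 1)
    (t : 𝕜) :
    (H + vecMulVec (t • E - H *ᵥ E) E).det = t * (E ⬝ᵥ (H.adjugate *ᵥ E)) := by
  rw [det_add_vecMulVec, mulVec_sub, mulVec_smul, mulVec_mulVec, adjugate_mul, smul_mulVec,
    one_mulVec, dotProduct_sub, dotProduct_smul, dotProduct_smul, hE, smul_eq_mul, smul_eq_mul,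
    mul_one, add_sub_cancel]

theorem det_tangentialHessian_add_smul_vecMulVec (H : Matrix ι ι 𝕜) {E : ι → 𝕜}
    (hE : E ⬝ᵥ E = 1) {t : 𝕜} (ht : t ≠ 0) :
    (tangentialHessian H E + t • vecMulVec E E).det = t * (E ⬝ᵥ (H.adjugate *ᵥ E)) := by
  set Y := H + vecMulVec (t • E - H *ᵥ E) E
  set r := H *ᵥ E - (E ⬝ᵥ (H *ᵥ E)) • E
  have hYE : Y *ᵥ E = t • E := by
    rw [add_mulVec, vecMulVec_mulVec', hE, one_smul, add_sub_cancel]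
  have hrE : r ⬝ᵥ E = 0 := by
    rw [sub_dotProduct, smul_dotProduct, hE, smul_eq_mul, mul_one, dotProduct_comm, sub_self]
  have hfactor : tangentialHessian H E + t • vecMulVec E E = Y * (1 + vecMulVec (-t⁻¹ • E) r) := by
    rw [Matrix.mul_add, Matrix.mul_one, mul_vecMulVec, mulVec_smul, hYE, smul_smul,
      neg_mul, inv_mul_cancel₀ ht, neg_one_smul]
    ext i j
    simp only [tangentialHessian, Y, r, Matrix.add_apply, Matrix.sub_apply, Matrix.smul_apply,
      vecMulVec_apply, Pi.sub_apply, Pi.smul_apply, Pi.neg_apply, smul_eq_mul]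
    ring
  rw [hfactor, det_mul, det_one_add_vecMulVec, dotProduct_smul, hrE, smul_zero, add_zero,
    mul_one, det_add_vecMulVec_smul_sub_mulVec H hE]

end TangentialHessian

theorem stmt1_general (n : ℕ)
    (F : (Fin (n+1) → ℝ) → ℝ)
    (p : Fin (n+1) → ℝ) (hreg : gradv F p ≠ 0)
    (nrm : ℝ) (hnrm : nrm = Real.sqrt (gradv F p ⬝ᵥ gradv F p))
    (E : Fin (n+1) → ℝ) (hE : E = (-nrm⁻¹) • gradv F p)
    (H : Matrix (Fin (n+1)) (Fin (n+1)) ℝ) (hH : H = hessM F p)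
    (PiM : Matrix (Fin (n+1)) (Fin (n+1)) ℝ)
    (hPiM : PiM = nrm⁻¹ • (H - vecMulVec (H *ᵥ E) E - vecMulVec E (H *ᵥ E)
      + (E ⬝ᵥ (H *ᵥ E)) • vecMulVec E E)) :
    PiM *ᵥ E = 0 ∧ (PiM + vecMulVec E E).det * nrm ^ (n+2) = Uval F p := by
  have hgg : 0 < gradv F p ⬝ᵥ gradv F p := by simpa using dotProduct_self_star_pos_iff.mpr hreg
  have hnrm_pos : 0 < nrm := hnrm ▸ Real.sqrt_pos.mpr hgg
  have hnrm_sq : nrm * nrm = gradv F p ⬝ᵥ gradv F p := hnrm ▸ Real.mul_self_sqrt hgg.le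
  have hEE : E ⬝ᵥ E = 1 := by
    rw [hE, smul_dotProduct, dotProduct_smul, smul_eq_mul, smul_eq_mul, ← hnrm_sq]
    field_simp
  have hg : gradv F p = (-nrm) • E := by
    rw [hE, smul_smul, neg_mul_neg, mul_inv_cancel₀ hnrm_pos.ne', one_smul]
  have hPi : PiM = nrm⁻¹ • tangentialHessian H E := hPiM
  refine ⟨by rw [hPi, smul_mulVec, tangentialHessian_mulVec_self hEE, smul_zero], ?_⟩
  calc (PiM + vecMulVec E E).det * nrm ^ (n+2) = nrm * (nrm • (PiM + vecMulVec E E)).det := by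
        rw [det_smul, Fintype.card_fin]; ring
    _ = nrm * (tangentialHessian H E + nrm • vecMulVec E E).det := by
        rw [hPi, smul_add, smul_smul, mul_inv_cancel₀ hnrm_pos.ne', one_smul]
    _ = Uval F p := by
        rw [det_tangentialHessian_add_smul_vecMulVec H hEE hnrm_pos.ne', Uval, Nvec, ← hH, hg,
          mulVec_smul, smul_dotProduct, dotProduct_smul, smul_eq_mul, smul_eq_mul]
        ring

/-- Reilly's identity `U(F) = K · |∇F|^(n+2)` relating `U(F)` to the
Gauss–Kronecker curvature of the level set of `F` through a regular point `p`. -/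
theorem stmt1 (n : ℕ) (hn : 1 ≤ n)
    (Ω : Set (Fin (n+1) → ℝ)) (hΩ : IsOpen Ω)
    (F : (Fin (n+1) → ℝ) → ℝ) (hF : ContDiffOn ℝ (⊤ : ℕ∞) F Ω)
    (p : Fin (n+1) → ℝ) (hp : p ∈ Ω) (hreg : gradv F p ≠ 0)
    (nrm : ℝ) (hnrm : nrm = Real.sqrt (gradv F p ⬝ᵥ gradv F p))
    (E : Fin (n+1) → ℝ) (hE : E = (-nrm⁻¹) • gradv F p)
    (H : Matrix (Fin (n+1)) (Fin (n+1)) ℝ) (hH : H = hessM F p)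
    (PiM : Matrix (Fin (n+1)) (Fin (n+1)) ℝ)
    (hPiM : PiM = nrm⁻¹ • (H - vecMulVec (H *ᵥ E) E - vecMulVec E (H *ᵥ E)
      + (E ⬝ᵥ (H *ᵥ E)) • vecMulVec E E)) :
    PiM *ᵥ E = 0 ∧ (PiM + vecMulVec E E).det * nrm ^ (n+2) = Uval F p :=
  stmt1_general n F p hreg nrm hnrm E hE H hH PiM hPiM
end

section
/- Let n ≥ 1, let F be a C^∞ function on an open set Ω ⊆ ℝ^{n+1}, and let p ∈ Ω. Then U(F)(p) ≠ 0 if and only if ∇F(p) ≠ 0 and the symmetric bilinear form (v,w) ↦ vᵀ·Hess F(p)·w is nondegenerate when restricted to the hyperplane ker dF(p) = { v ∈ ℝ^{n+1} : ⟨∇F(p), v⟩ = 0 } (i.e., for every nonzero v in this hyperplane there is w in the hyperplane with vᵀ·Hess F(p)·w ≠ 0). -/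
open Matrix

/-!
The statement is pure linear algebra about `A = Hess F(p)` and `g = ∇F(p)`: `U(F)(p)` is minus
the determinant of the bordered Hessian `[[A, g], [gᵀ, 0]]`. For invertible `A` this is the Schur
complement formula, and it extends to all `A` by continuity, since `A - t • 1` is invertible for
all but finitely many `t`. A row vector `(v, t)` lies in the left kernel of the bordered matrix iff
`g ⬝ᵥ v = 0` and `v ᵥ* A = -t • g`, and for `v` in the hyperplane `g⊥` the latter says exactly that
`v ⬝ᵥ A *ᵥ w = 0` for every `w ∈ g⊥`, because the vectors orthogonal to `g⊥` are the multiples of `g`.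
-/

theorem exists_eq_smul_of_forall_dotProduct_eq_zero {ι : Type*} [Fintype ι] {g u : ι → ℝ}
    (h : ∀ w, g ⬝ᵥ w = 0 → u ⬝ᵥ w = 0) : ∃ t : ℝ, u = t • g := by
  rcases eq_or_ne g 0 with rfl | hg
  · exact ⟨0, by simpa using h u (zero_dotProduct u)⟩
  have hgg : g ⬝ᵥ g ≠ 0 := by rwa [Ne, dotProduct_self_eq_zero]
  set t := (u ⬝ᵥ g) / (g ⬝ᵥ g)
  have hperp : g ⬝ᵥ (u - t • g) = 0 := by
    rw [dotProduct_sub, dotProduct_smul, smul_eq_mul, dotProduct_comm g u]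
    simp only [t, div_mul_cancel₀ _ hgg, sub_self]
  have hself : (u - t • g) ⬝ᵥ (u - t • g) = 0 := by
    rw [sub_dotProduct, smul_dotProduct, h _ hperp, hperp, smul_zero, sub_zero]
  exact ⟨t, sub_eq_zero.mp (dotProduct_self_eq_zero.mp hself)⟩

namespace Matrix

variable {ι : Type*}

def bordered (A : Matrix ι ι ℝ) (u v : ι → ℝ) : Matrix (ι ⊕ Unit) (ι ⊕ Unit) ℝ :=
  fromBlocks A (replicateCol Unit u) (replicateRow Unit v) 0

theorem continuous_bordered (u v : ι → ℝ) : Continuous fun A : Matrix ι ι ℝ => bordered A u v :=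
  continuous_id.matrix_fromBlocks continuous_const continuous_const continuous_const

variable [Fintype ι]

theorem sumElim_vecMul_bordered (A : Matrix ι ι ℝ) (u v x : ι → ℝ) (t : ℝ) :
    Sum.elim x (fun _ => t) ᵥ* bordered A u v = Sum.elim (x ᵥ* A + t • v) (fun _ => x ⬝ᵥ u) := by
  ext (i | i) <;> simp [bordered, vecMul, dotProduct]

variable [DecidableEq ι]

theorem det_bordered_of_invertible (A : Matrix ι ι ℝ) [Invertible A] (u v : ι → ℝ) :
    (bordered A u v).det = -(v ⬝ᵥ A.adjugate *ᵥ u) := by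
  have : Invertible A.det := A.detInvertibleOfInvertible
  have hadj : A.adjugate = A.det • ⅟A := by
    rw [invOf_eq, smul_smul, mul_invOf_self, one_smul]
  have hschur : (0 - replicateRow Unit v * ⅟A * replicateCol Unit u).det = -(v ⬝ᵥ ⅟A *ᵥ u) := by
    rw [dotProduct_mulVec]
    simp [det_unique, mul_apply, vecMul, dotProduct]
  rw [bordered, det_fromBlocks₁₁, hschur, hadj, smul_mulVec, dotProduct_smul, smul_eq_mul, mul_neg]

theorem det_bordered (A : Matrix ι ι ℝ) (u v : ι → ℝ) :
    (bordered A u v).det = -(v ⬝ᵥ A.adjugate *ᵥ u) := by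
  let f : ℝ → ℝ := fun t =>
    (bordered (A - algebraMap ℝ _ t) u v).det + v ⬝ᵥ (A - algebraMap ℝ _ t).adjugate *ᵥ u
  have hpert : Continuous fun t : ℝ => A - algebraMap ℝ (Matrix ι ι ℝ) t :=
    continuous_const.sub (continuous_algebraMap ℝ _)
  have hf : Continuous f :=
    ((continuous_bordered u v).comp hpert).matrix_det.add
      (continuous_const.dotProduct (hpert.matrix_adjugate.matrix_mulVec continuous_const))
  have hf_eq : ∀ t ∈ (spectrum ℝ A)ᶜ, f t = 0 := fun t ht => by
    have : Invertible (A - algebraMap ℝ _ t) := by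
      rw [← neg_sub]; exact (spectrum.notMem_iff.mp ht).neg.invertible
    simp only [f, det_bordered_of_invertible, neg_add_cancel]
  have := Continuous.ext_on (A.finite_spectrum.countable.dense_compl ℝ) hf continuous_const hf_eq
  simpa [f, add_eq_zero_iff_eq_neg] using congrFun this 0

theorem det_bordered_self_eq_zero_iff (A : Matrix ι ι ℝ) {g : ι → ℝ} (hg : g ≠ 0) :
    (bordered A g g).det = 0 ↔
      ∃ v ≠ 0, g ⬝ᵥ v = 0 ∧ ∀ w, g ⬝ᵥ w = 0 → v ⬝ᵥ (A *ᵥ w) = 0 := by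
  rw [← exists_vecMul_eq_zero_iff]
  constructor
  · rintro ⟨x, hx, hker⟩
    obtain ⟨v, t, rfl⟩ : ∃ v t, x = Sum.elim v fun _ => t :=
      ⟨x ∘ Sum.inl, x (Sum.inr ()), by ext (i | ⟨⟩) <;> rfl⟩
    rw [sumElim_vecMul_bordered] at hker
    have hAv : v ᵥ* A = -t • g := by
      rw [neg_smul, ← sub_eq_zero, sub_neg_eq_add]
      exact funext fun i => congrFun hker (Sum.inl i)
    have hv : v ≠ 0 := by
      rintro rfl
      have ht : t = 0 := by simpa [hg, eq_comm] using hAv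
      exact hx (by ext (i | ⟨⟩) <;> simp [ht])
    refine ⟨v, hv, ?_, fun w hw => ?_⟩
    · rw [dotProduct_comm]; exact congrFun hker (Sum.inr ())
    · rw [dotProduct_mulVec, hAv, smul_dotProduct, hw, smul_zero]
  · rintro ⟨v, hv, hgv, hdeg⟩
    obtain ⟨t, ht⟩ := exists_eq_smul_of_forall_dotProduct_eq_zero (g := g) (u := v ᵥ* A)
      fun w hw => by rw [← dotProduct_mulVec]; exact hdeg w hw
    refine ⟨Sum.elim v (fun _ => -t), fun h => hv ?_, ?_⟩
    · ext i; exact congrFun h (Sum.inl i)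
    · rw [sumElim_vecMul_bordered, ht, dotProduct_comm, hgv, neg_smul, add_neg_cancel]
      ext (i | i) <;> rfl

theorem dotProduct_adjugate_mulVec_ne_zero_iff (A : Matrix ι ι ℝ) (g : ι → ℝ) :
    g ⬝ᵥ A.adjugate *ᵥ g ≠ 0 ↔
      g ≠ 0 ∧ ∀ v, g ⬝ᵥ v = 0 → v ≠ 0 → ∃ w, g ⬝ᵥ w = 0 ∧ v ⬝ᵥ (A *ᵥ w) ≠ 0 := by
  rcases eq_or_ne g 0 with rfl | hg
  · simp
  rw [Ne, ← neg_eq_zero, ← det_bordered, det_bordered_self_eq_zero_iff A hg]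
  push Not
  exact ⟨fun h => ⟨hg, fun v hgv hv => h v hv hgv⟩, fun h v hv hgv => h.2 v hgv hv⟩

end Matrix

theorem stmt2_general (n : ℕ)
    (F : (Fin (n+1) → ℝ) → ℝ)
    (p : Fin (n+1) → ℝ) :
    Uval F p ≠ 0 ↔
      (gradv F p ≠ 0 ∧
        ∀ v : Fin (n+1) → ℝ, gradv F p ⬝ᵥ v = 0 → v ≠ 0 →
          ∃ w : Fin (n+1) → ℝ, gradv F p ⬝ᵥ w = 0 ∧ v ⬝ᵥ (hessM F p *ᵥ w) ≠ 0) :=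
  dotProduct_adjugate_mulVec_ne_zero_iff (hessM F p) (gradv F p)

/-- `U(F)(p) ≠ 0` iff `p` is a regular point of `F` and the Hessian of `F`
restricts nondegenerately to the tangent hyperplane `ker dF(p)` of the level set. -/
theorem stmt2 (n : ℕ) (hn : 1 ≤ n)
    (Ω : Set (Fin (n+1) → ℝ)) (hΩ : IsOpen Ω)
    (F : (Fin (n+1) → ℝ) → ℝ) (hF : ContDiffOn ℝ (⊤ : ℕ∞) F Ω)
    (p : Fin (n+1) → ℝ) (hp : p ∈ Ω) :
    Uval F p ≠ 0 ↔
      (gradv F p ≠ 0 ∧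
        ∀ v : Fin (n+1) → ℝ, gradv F p ⬝ᵥ v = 0 → v ≠ 0 →
          ∃ w : Fin (n+1) → ℝ, gradv F p ⬝ᵥ w = 0 ∧ v ⬝ᵥ (hessM F p *ᵥ w) ≠ 0) :=
  stmt2_general n F p
end

section
/- Let n ≥ 1, let A be a real symmetric (n+1)×(n+1) matrix and f ∈ ℝ^{n+1}, and suppose u := fᵀ·(adj A)·f ≠ 0; set N := (adj A)·f, and let σ := M_q⁻¹ − q⁻¹u⁻¹·NNᵀ for any q ≠ 0, where M_q := A − u⁻¹(det A)·ffᵀ + q·u⁻¹·ffᵀ (σ is independent of q). Then adj A − u⁻¹·NNᵀ = (det A)·σ. In particular, if det A = 0 then adj A = u⁻¹·NNᵀ and the rank of A equals n. -/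
/-!
If `det A ≠ 0`, then `M_q = A + u⁻¹ (q - det A) f fᵀ` is a rank-one perturbation of `A`, and the
Sherman–Morrison formula, written with `adj A = (det A) A⁻¹`, gives
`M_q⁻¹ = (det A)⁻¹ (adj A - u⁻¹ N Nᵀ) + q⁻¹ u⁻¹ N Nᵀ`.

If `det A = 0`, then `A * adj A = 0` forces `rank A + rank (adj A) ≤ n + 1`, while `u ≠ 0` makes
`adj A ≠ 0`, so some `n × n` minor of `A` is nonzero and `rank A ≥ n`. Hence `rank A = n` and
`adj A` has rank one. A rank-one matrix `B` satisfies `(B f) (fᵀ B) = (fᵀ B f) B`, and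
`fᵀ adj A = Nᵀ` because `adj A` is symmetric.
-/

open Matrix

namespace Matrix

variable {K ι : Type*} [Field K] [Fintype ι] [DecidableEq ι]

theorem one_le_rank_of_ne_zero {m : Type*} {B : Matrix m ι K} (hB : B ≠ 0) : 1 ≤ B.rank := by
  rw [rank, Submodule.one_le_finrank_iff, Ne, LinearMap.range_eq_bot]
  contrapose! hB
  ext i j
  simpa using congr_fun (LinearMap.congr_fun hB (Pi.single j 1)) i

theorem exists_eq_vecMulVec_of_rank_le_one {m : Type*} {B : Matrix m ι K} (hB : B.rank ≤ 1) :
    ∃ v w, B = vecMulVec v w := by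
  obtain ⟨v, hv⟩ := finrank_le_one_iff.mp hB
  choose c hc using fun j => hv ⟨B *ᵥ Pi.single j 1, LinearMap.mem_range_self B.mulVecLin _⟩
  refine ⟨v, c, ?_⟩
  ext i j
  simpa [vecMulVec_apply, mul_comm] using congr_fun (congr_arg Subtype.val (hc j)).symm i

theorem vecMulVec_mulVec_vecMul_of_rank_le_one {B : Matrix ι ι K} (hB : B.rank ≤ 1)
    (f : ι → K) : vecMulVec (B *ᵥ f) (f ᵥ* B) = (f ⬝ᵥ B *ᵥ f) • B := by
  obtain ⟨v, w, rfl⟩ := exists_eq_vecMulVec_of_rank_le_one hB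
  have hBf : vecMulVec v w *ᵥ f = (w ⬝ᵥ f) • v := by
    rw [vecMulVec_mulVec, op_smul_eq_smul]
  rw [hBf, vecMul_vecMulVec, dotProduct_smul, smul_vecMulVec, vecMulVec_smul, smul_smul,
    smul_eq_mul, mul_comm]

theorem rank_add_rank_adjugate_le_of_det_eq_zero {A : Matrix ι ι K} (hdet : A.det = 0) :
    A.rank + A.adjugate.rank ≤ Fintype.card ι :=
  rank_add_rank_le_card_of_mul_eq_zero (by rw [mul_adjugate, hdet, zero_smul])

theorem le_rank_of_adjugate_ne_zero {n : ℕ} {A : Matrix (Fin (n + 1)) (Fin (n + 1)) K}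
    (hA : A.adjugate ≠ 0) : n ≤ A.rank := by
  obtain ⟨i, j, hij⟩ : ∃ i j, A.adjugate i j ≠ 0 := by
    by_contra! h
    exact hA (Matrix.ext h)
  have hminor : (A.submatrix j.succAbove i.succAbove).det ≠ 0 := by
    rw [adjugate_fin_succ_eq_det_submatrix] at hij
    exact right_ne_zero_of_mul hij
  calc n = (A.submatrix j.succAbove i.succAbove).rank := by
        rw [rank_of_det_ne_zero hminor, Fintype.card_fin]
    _ ≤ A.rank := rank_submatrix_le _ _ _

theorem rank_adjugate_le_one_of_det_eq_zero {n : ℕ} {A : Matrix (Fin (n + 1)) (Fin (n + 1)) K}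
    (hdet : A.det = 0) : A.adjugate.rank ≤ 1 := by
  by_cases hA : A.adjugate = 0
  · simp [hA]
  · have := rank_add_rank_adjugate_le_of_det_eq_zero hdet
    have := le_rank_of_adjugate_ne_zero hA
    simp only [Fintype.card_fin] at *
    omega

theorem rank_eq_of_det_eq_zero_of_adjugate_ne_zero {n : ℕ}
    {A : Matrix (Fin (n + 1)) (Fin (n + 1)) K} (hdet : A.det = 0) (hA : A.adjugate ≠ 0) :
    A.rank = n := by
  have := rank_add_rank_adjugate_le_of_det_eq_zero hdet
  have := le_rank_of_adjugate_ne_zero hA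
  have := one_le_rank_of_ne_zero hA
  simp only [Fintype.card_fin] at *
  omega

theorem IsSymm.adjugate_eq_smul_vecMulVec_of_det_eq_zero {n : ℕ}
    {A : Matrix (Fin (n + 1)) (Fin (n + 1)) K} (hA : A.IsSymm) (hdet : A.det = 0)
    {f N : Fin (n + 1) → K} {u : K} (hN : A.adjugate *ᵥ f = N) (hu : f ⬝ᵥ N = u) (hu0 : u ≠ 0) :
    A.adjugate = u⁻¹ • vecMulVec N N := by
  subst hN hu
  rw [eq_inv_smul_iff₀ hu0, ← vecMulVec_mulVec_vecMul_of_rank_le_one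
    (rank_adjugate_le_one_of_det_eq_zero hdet), ← mulVec_transpose, hA.adjugate.eq]

theorem IsSymm.inv_add_smul_vecMulVec_self {A : Matrix ι ι K} (hA : A.IsSymm) (hdet : A.det ≠ 0)
    {f N : ι → K} {u q : K} (hN : A.adjugate *ᵥ f = N) (hu : f ⬝ᵥ N = u) (hu0 : u ≠ 0)
    (hq : q ≠ 0) :
    (A + (u⁻¹ * (q - A.det)) • vecMulVec f f)⁻¹
      = A.det⁻¹ • (A.adjugate - u⁻¹ • vecMulVec N N) + (q⁻¹ * u⁻¹) • vecMulVec N N := by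
  set M := A + (u⁻¹ * (q - A.det)) • vecMulVec f f
  have hfB : f ᵥ* A.adjugate = N := by rw [← mulVec_transpose, hA.adjugate.eq, hN]
  have hMB : M * A.adjugate = A.det • 1 + (u⁻¹ * (q - A.det)) • vecMulVec f N := by
    rw [add_mul, smul_mul, mul_adjugate, vecMulVec_mul, hfB]
  have hMN : M *ᵥ N = q • f := by
    rw [add_mulVec, smul_mulVec, vecMulVec_mulVec, op_smul_eq_smul, hu, ← hN, mulVec_mulVec,
      mul_adjugate, smul_mulVec, one_mulVec, smul_smul, ← add_smul]
    congr 1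
    field_simp
    ring
  refine inv_eq_right_inv ?_
  rw [mul_add, Matrix.mul_smul, mul_sub, hMB, Matrix.mul_smul, Matrix.mul_smul, mul_vecMulVec,
    hMN, smul_vecMulVec]
  match_scalars
  · field_simp
  · field_simp
    ring

end Matrix

theorem stmt4_general (n : ℕ)
    (A : Matrix (Fin (n+1)) (Fin (n+1)) ℝ) (hA : A.IsSymm)
    (f : Fin (n+1) → ℝ)
    (u : ℝ) (hu : u = f ⬝ᵥ (A.adjugate *ᵥ f)) (hu0 : u ≠ 0)
    (N : Fin (n+1) → ℝ) (hN : N = A.adjugate *ᵥ f)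
    (M : ℝ → Matrix (Fin (n+1)) (Fin (n+1)) ℝ)
    (hM : ∀ q : ℝ, M q = A - (u⁻¹ * A.det) • vecMulVec f f + (q * u⁻¹) • vecMulVec f f) :
    (∀ q : ℝ, q ≠ 0 →
      A.adjugate - u⁻¹ • vecMulVec N N
        = A.det • ((M q)⁻¹ - (q⁻¹ * u⁻¹) • vecMulVec N N)) ∧
    (A.det = 0 → A.adjugate = u⁻¹ • vecMulVec N N ∧ A.rank = n) := by
  have hu' : f ⬝ᵥ N = u := by rw [hN, hu]
  have hsingular (hdet : A.det = 0) : A.adjugate = u⁻¹ • vecMulVec N N :=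
    hA.adjugate_eq_smul_vecMulVec_of_det_eq_zero hdet hN.symm hu' hu0
  have hadj : A.adjugate ≠ 0 := fun h => hu0 (by simp [hu, h])
  refine ⟨fun q hq => ?_, fun hdet =>
    ⟨hsingular hdet, rank_eq_of_det_eq_zero_of_adjugate_ne_zero hdet hadj⟩⟩
  by_cases hdet : A.det = 0
  · rw [hdet, zero_smul, hsingular hdet, sub_self]
  have hMq : M q = A + (u⁻¹ * (q - A.det)) • vecMulVec f f := by
    rw [hM]
    module
  rw [hMq, hA.inv_add_smul_vecMulVec_self hdet hN.symm hu' hu0 hq, add_sub_cancel_right,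
    smul_smul, mul_inv_cancel₀ hdet, one_smul]

/-- with `A` symmetric, `u = fᵀ (adj A) f ≠ 0`, `N = (adj A) f`, and
`σ = M_q⁻¹ − q⁻¹ u⁻¹ N Nᵀ` where `M_q = A − u⁻¹(det A) f fᵀ + q u⁻¹ f fᵀ`, one has
`adj A − u⁻¹ N Nᵀ = (det A)·σ`; in particular if `det A = 0` then
`adj A = u⁻¹ N Nᵀ` and `rank A = n`. -/
theorem stmt4 (n : ℕ) (hn : 1 ≤ n)
    (A : Matrix (Fin (n+1)) (Fin (n+1)) ℝ) (hA : A.IsSymm)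
    (f : Fin (n+1) → ℝ)
    (u : ℝ) (hu : u = f ⬝ᵥ (A.adjugate *ᵥ f)) (hu0 : u ≠ 0)
    (N : Fin (n+1) → ℝ) (hN : N = A.adjugate *ᵥ f)
    (M : ℝ → Matrix (Fin (n+1)) (Fin (n+1)) ℝ)
    (hM : ∀ q : ℝ, M q = A - (u⁻¹ * A.det) • vecMulVec f f + (q * u⁻¹) • vecMulVec f f) :
    (∀ q : ℝ, q ≠ 0 →
      A.adjugate - u⁻¹ • vecMulVec N N
        = A.det • ((M q)⁻¹ - (q⁻¹ * u⁻¹) • vecMulVec N N)) ∧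
    (A.det = 0 → A.adjugate = u⁻¹ • vecMulVec N N ∧ A.rank = n) :=
  stmt4_general n A hA f u hu hu0 N hN M hM
end

section
/- Let n ≥ 1, let F be a C^∞ function on an open set Ω ⊆ ℝ^{n+1}, and let p ∈ Ω with U(F)(p) ≠ 0. Define the symmetric matrix h := −U(F)(p)⁻¹·( Hess F(p) − H(F)(p)·U(F)(p)⁻¹·∇F(p)∇F(p)ᵀ ) (the representative, with respect to the transversal N(F), of the second fundamental form of the level set of F through p). Then for any vectors v₁, …, vₙ ∈ ker dF(p) = { v : ⟨∇F(p), v⟩ = 0 }: |U(F)(p)|^{n+1} · | det( (vᵢᵀ h vⱼ)_{1≤i,j≤n} ) | = ( det[ N(F)(p), v₁, …, vₙ ] )², where det[N, v₁, …, vₙ] denotes the determinant of the (n+1)×(n+1) matrix with these columns. (Equivalently, along a level set, |U(F)|^{(n+1)/2} times the volume density of h equals the volume density induced by interior multiplication of N into the standard volume form.) -/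
/-!
Let `A = Hess F(p)`, `g = ∇F(p)`, `N = adj(A) g` and `M = [N, v₁, …, vₙ]`. Since `A N = det A · g`
and `g ⟂ vᵢ`, the first column of `Mᵀ A M` is `(det A · U, 0, …, 0)` and its lower right minor is
`(vᵢᵀ A vⱼ)`, so `det A · (det M)² = det A · U · det (vᵢᵀ A vⱼ)`. Cancelling `det A` gives
`(det M)² = U · det (vᵢᵀ A vⱼ)` for invertible `A`, and then for every `A` by continuity along
`A + t • 1`, which is singular for only finitely many `t`. On `ker dF(p)` the rank-one part of `h`
vanishes, so `(vᵢᵀ h vⱼ) = -U⁻¹ (vᵢᵀ A vⱼ)`, and the powers of `|U|` balance.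
-/

open Matrix

section Frame

variable {n : ℕ}

def frameMatrix (N : Fin (n+1) → ℝ) (v : Fin n → Fin (n+1) → ℝ) :
    Matrix (Fin (n+1)) (Fin (n+1)) ℝ :=
  Matrix.of fun i j => (Fin.cons N v : Fin (n+1) → Fin (n+1) → ℝ) j i

def restrictForm {m : Type*} [Fintype m] (A : Matrix m m ℝ) (v : Fin n → m → ℝ) :
    Matrix (Fin n) (Fin n) ℝ :=
  Matrix.of fun i j => v i ⬝ᵥ (A *ᵥ v j)

lemma transpose_frameMatrix_mul_mul_frameMatrix_apply (A : Matrix (Fin (n+1)) (Fin (n+1)) ℝ)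
    (N : Fin (n+1) → ℝ) (v : Fin n → Fin (n+1) → ℝ) (i j : Fin (n+1)) :
    ((frameMatrix N v)ᵀ * A * frameMatrix N v) i j
      = (Fin.cons N v : Fin (n+1) → Fin (n+1) → ℝ) i ⬝ᵥ
          (A *ᵥ (Fin.cons N v : Fin (n+1) → Fin (n+1) → ℝ) j) := by
  rw [Matrix.mul_assoc]
  simp only [Matrix.mul_apply, transpose_apply, frameMatrix, of_apply, dotProduct, mulVec]

lemma det_mul_det_frameMatrix_sq (A : Matrix (Fin (n+1)) (Fin (n+1)) ℝ)
    {g : Fin (n+1) → ℝ} {v : Fin n → Fin (n+1) → ℝ} (hv : ∀ i, g ⬝ᵥ v i = 0) :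
    A.det * (frameMatrix (A.adjugate *ᵥ g) v).det ^ 2
      = A.det * ((g ⬝ᵥ (A.adjugate *ᵥ g)) * (restrictForm A v).det) := by
  set N := A.adjugate *ᵥ g
  have hAN : A *ᵥ N = A.det • g := by
    rw [mulVec_mulVec, mul_adjugate, smul_mulVec, one_mulVec]
  set C := (frameMatrix N v)ᵀ * A * frameMatrix N v with hC
  have hC00 : C 0 0 = A.det * (g ⬝ᵥ N) := by
    rw [hC, transpose_frameMatrix_mul_mul_frameMatrix_apply, Fin.cons_zero, hAN,
      dotProduct_smul, smul_eq_mul, dotProduct_comm]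
  have hCcol : ∀ i : Fin n, C i.succ 0 = 0 := fun i => by
    rw [hC, transpose_frameMatrix_mul_mul_frameMatrix_apply, Fin.cons_zero, Fin.cons_succ, hAN,
      dotProduct_smul, dotProduct_comm, hv, smul_zero]
  have hCminor : C.submatrix Fin.succ Fin.succ = restrictForm A v := by
    ext i j
    rw [submatrix_apply, hC, transpose_frameMatrix_mul_mul_frameMatrix_apply]
    simp only [Fin.cons_succ, restrictForm, of_apply]
  have hdetC : C.det = A.det * (g ⬝ᵥ N) * (restrictForm A v).det := by
    rw [det_succ_column_zero, Fin.sum_univ_succ]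
    simp [hCcol, hC00, ← hCminor, Fin.succAbove_zero]
  calc A.det * (frameMatrix N v).det ^ 2 = C.det := by
        rw [hC, det_mul, det_mul, det_transpose]; ring
    _ = _ := by rw [hdetC, mul_assoc]

lemma dense_setOf_det_add_smul_one_ne_zero {m : Type*} [Fintype m] [DecidableEq m]
    (A : Matrix m m ℝ) : Dense {t : ℝ | (A + t • (1 : Matrix m m ℝ)).det ≠ 0} := by
  have hroots : {t : ℝ | ((-A).charpoly).IsRoot t}.Finite :=
    Polynomial.finite_setOfPred_isRoot (charpoly_monic (-A)).ne_zero
  refine (hroots.countable.dense_compl ℝ).mono fun t ht => ?_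
  simpa [Polynomial.IsRoot, eval_charpoly, scalar_apply, smul_one_eq_diagonal, add_comm] using ht

lemma det_frameMatrix_sq (A : Matrix (Fin (n+1)) (Fin (n+1)) ℝ)
    {g : Fin (n+1) → ℝ} {v : Fin n → Fin (n+1) → ℝ} (hv : ∀ i, g ⬝ᵥ v i = 0) :
    (frameMatrix (A.adjugate *ᵥ g) v).det ^ 2
      = (g ⬝ᵥ (A.adjugate *ᵥ g)) * (restrictForm A v).det := by
  set P : ℝ → Matrix (Fin (n+1)) (Fin (n+1)) ℝ := fun t => A + t • 1
  have hP : Continuous P := continuous_const.add (continuous_id.smul continuous_const)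
  have hN : Continuous fun t => (P t).adjugate *ᵥ g :=
    hP.matrix_adjugate.matrix_mulVec continuous_const
  have hlhs : Continuous fun t => (frameMatrix ((P t).adjugate *ᵥ g) v).det ^ 2 := by
    refine (Continuous.matrix_det (continuous_matrix fun i j => ?_)).pow 2
    refine Fin.cases ?_ (fun j => ?_) j
    · exact (continuous_apply i).comp hN
    · exact continuous_const
  have hrhs : Continuous fun t => (g ⬝ᵥ ((P t).adjugate *ᵥ g)) * (restrictForm (P t) v).det :=
    (continuous_const.dotProduct hN).mul <| Continuous.matrix_det <| continuous_matrix
      fun i j => continuous_const.dotProduct (hP.matrix_mulVec continuous_const)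
  have heq := hlhs.ext_on (dense_setOf_det_add_smul_one_ne_zero A) hrhs
    fun t ht => mul_left_cancel₀ ht (det_mul_det_frameMatrix_sq (P t) hv)
  simpa [P] using congrFun heq 0

lemma restrictForm_smul_sub_smul_vecMulVec {m : Type*} [Fintype m]
    (A : Matrix m m ℝ) (c d : ℝ) {g : m → ℝ} {v : Fin n → m → ℝ} (hv : ∀ i, g ⬝ᵥ v i = 0) :
    restrictForm (c • (A - d • vecMulVec g g)) v = c • restrictForm A v := by
  ext i j
  have hg : vecMulVec g g *ᵥ v j = 0 := by
    rw [vecMulVec_mulVec, hv, MulOpposite.op_zero, zero_smul]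
  simp only [restrictForm, of_apply, Matrix.smul_apply, smul_mulVec, sub_mulVec, hg, smul_zero,
    sub_zero, dotProduct_smul, smul_eq_mul]

end Frame

theorem stmt5_general (n : ℕ)
    (F : (Fin (n+1) → ℝ) → ℝ)
    (p : Fin (n+1) → ℝ) (hU : Uval F p ≠ 0)
    (h : Matrix (Fin (n+1)) (Fin (n+1)) ℝ)
    (hh : h = (-(Uval F p)⁻¹) • (hessM F p
      - (Hdet F p * (Uval F p)⁻¹) • vecMulVec (gradv F p) (gradv F p)))
    (v : Fin n → (Fin (n+1) → ℝ)) (hv : ∀ i, gradv F p ⬝ᵥ v i = 0) :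
    |Uval F p| ^ (n+1) * |(Matrix.of fun i j => v i ⬝ᵥ (h *ᵥ v j)).det|
      = (Matrix.of fun i j => (Fin.cons (Nvec F p) v : Fin (n+1) → (Fin (n+1) → ℝ)) j i).det ^ 2 := by
  have hframe : (frameMatrix (Nvec F p) v).det ^ 2
      = |Uval F p * (restrictForm (hessM F p) v).det| := by
    rw [abs_of_nonneg (det_frameMatrix_sq (hessM F p) hv ▸ sq_nonneg _)]
    exact det_frameMatrix_sq _ hv
  change _ * |(restrictForm h v).det| = (frameMatrix (Nvec F p) v).det ^ 2
  rw [hframe, hh, restrictForm_smul_sub_smul_vecMulVec _ _ _ hv, det_smul, Fintype.card_fin,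
    abs_mul, abs_mul, abs_pow, abs_neg, abs_inv, inv_pow]
  field_simp [abs_ne_zero.mpr hU]
  ring

/-- the volume-density relation `|U(F)|^{(n+1)/2}·vol_h = |ι_N Ψ|` along a
level set, stated in squared form: for tangent vectors `v₁,…,vₙ` of the level set,
`|U(F)|^{n+1}·|det(h(vᵢ,vⱼ))| = det[N, v₁, …, vₙ]²`. -/
theorem stmt5 (n : ℕ) (hn : 1 ≤ n)
    (Ω : Set (Fin (n+1) → ℝ)) (hΩ : IsOpen Ω)
    (F : (Fin (n+1) → ℝ) → ℝ) (hF : ContDiffOn ℝ (⊤ : ℕ∞) F Ω)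
    (p : Fin (n+1) → ℝ) (hp : p ∈ Ω) (hU : Uval F p ≠ 0)
    (h : Matrix (Fin (n+1)) (Fin (n+1)) ℝ)
    (hh : h = (-(Uval F p)⁻¹) • (hessM F p
      - (Hdet F p * (Uval F p)⁻¹) • vecMulVec (gradv F p) (gradv F p)))
    (v : Fin n → (Fin (n+1) → ℝ)) (hv : ∀ i, gradv F p ⬝ᵥ v i = 0) :
    |Uval F p| ^ (n+1) * |(Matrix.of fun i j => v i ⬝ᵥ (h *ᵥ v j)).det|
      = (Matrix.of fun i j => (Fin.cons (Nvec F p) v : Fin (n+1) → (Fin (n+1) → ℝ)) j i).det ^ 2 :=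
  stmt5_general n F p hU h hh v hv
end

section
/- Let n ≥ 1, let F be a C^∞ function on an open set Ω ⊆ ℝ^{n+1}, let I ⊆ ℝ be an open interval containing F(Ω), and let ψ : I → ℝ be a C^∞ function with nowhere-vanishing derivative ψ′. Then for every x ∈ Ω: U(ψ∘F)(x) = ψ′(F(x))^{n+2} · U(F)(x). In particular, if U(F) is nowhere zero on Ω then U(ψ∘F) is nowhere zero on Ω. -/
open Matrix

/-!
The chain rule gives `∇(ψ ∘ F) = ψ' ∇F` and `Hess(ψ ∘ F) = ψ' Hess F + ψ'' ∇F ∇Fᵀ`. The rank-one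
term is invisible to `adj(·) ∇F`: by Cramer's rule the `i`-th entry of `adj(A) u` is the determinant
of `A` with column `i` replaced by `u`, and once `u` is a column, the rank-one part `v_j u` of every
other column can be subtracted off. What remains are the scalings: `ψ'^n` from `adj(ψ' Hess F)` and
one `ψ'` from each of the two gradients.
-/

namespace Matrix

variable {ι R : Type*} [Fintype ι] [DecidableEq ι] [CommRing R]

theorem det_updateCol_add_vecMulVec (A : Matrix ι ι R) (u v : ι → R) (i : ι) :
    ((A + vecMulVec u v).updateCol i u).det = (A.updateCol i u).det := by
  set w := Function.update v i 0
  have hfactor : (A + vecMulVec u v).updateCol i u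
      = A.updateCol i u * (1 + vecMulVec (Pi.single i 1) w) := by
    rw [Matrix.mul_add, Matrix.mul_one, mul_vecMulVec, mulVec_single_one]
    ext k j
    by_cases hj : j = i <;> simp [vecMulVec_apply, w, hj]
  have hunit : (1 + vecMulVec (Pi.single i 1 : ι → R) w).det = 1 := by
    rw [vecMulVec_eq Unit, det_one_add_replicateCol_mul_replicateRow]
    simp [w]
  rw [hfactor, det_mul, hunit, mul_one]

theorem adjugate_add_vecMulVec_mulVec (A : Matrix ι ι R) (u v : ι → R) :
    (A + vecMulVec u v).adjugate *ᵥ u = A.adjugate *ᵥ u := by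
  ext i
  rw [← cramer_eq_adjugate_mulVec, ← cramer_eq_adjugate_mulVec, cramer_apply, cramer_apply,
    det_updateCol_add_vecMulVec]

theorem dotProduct_adjugate_smul_add_vecMulVec [Nonempty ι] (A : Matrix ι ι R) (g : ι → R)
    (c t : R) :
    (c • g) ⬝ᵥ ((c • A + t • vecMulVec g g).adjugate *ᵥ (c • g))
      = c ^ (Fintype.card ι + 1) * (g ⬝ᵥ (A.adjugate *ᵥ g)) := by
  have hcard : Fintype.card ι - 1 + 2 = Fintype.card ι + 1 := by
    have := Fintype.card_pos (α := ι); omega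
  rw [← vecMulVec_smul, mulVec_smul, adjugate_add_vecMulVec_mulVec, adjugate_smul, smul_mulVec,
    ← hcard]
  simp only [dotProduct_smul, smul_dotProduct, smul_eq_mul]
  ring

end Matrix

open Filter Topology

section Reparametrization

variable {ι : Type*} [Fintype ι] [DecidableEq ι] {F : (ι → ℝ) → ℝ} {ψ : ℝ → ℝ} {x : ι → ℝ}

theorem pd1_comp (hψ : DifferentiableAt ℝ ψ (F x)) (hF : DifferentiableAt ℝ F x) (i : ι) :
    pd1 (ψ ∘ F) i x = deriv ψ (F x) * pd1 F i x := by
  simp [pd1, (hψ.hasDerivAt.comp_hasFDerivAt x hF.hasFDerivAt).fderiv]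

theorem gradv_comp (hψ : DifferentiableAt ℝ ψ (F x)) (hF : DifferentiableAt ℝ F x) :
    gradv (ψ ∘ F) x = deriv ψ (F x) • gradv F x :=
  funext (pd1_comp hψ hF)

theorem ContDiffAt.pd1 {n : WithTop ℕ∞} (hF : ContDiffAt ℝ (n + 1) F x) (i : ι) :
    ContDiffAt ℝ n (pd1 F i) x :=
  (hF.fderiv_right le_rfl).clm_apply contDiffAt_const

theorem hessM_comp (hψ : ContDiffAt ℝ 2 ψ (F x)) (hF : ContDiffAt ℝ 2 F x) :
    hessM (ψ ∘ F) x = deriv ψ (F x) • hessM F x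
      + deriv (deriv ψ) (F x) • vecMulVec (gradv F x) (gradv F x) := by
  have hψ' : DifferentiableAt ℝ (deriv ψ) (F x) :=
    (hψ.derivWithin (m := 1) (by norm_num)).differentiableAt one_ne_zero
  have hF' (j : ι) : DifferentiableAt ℝ (pd1 F j) x :=
    (hF.pd1 (n := 1) j).differentiableAt one_ne_zero
  ext i j
  have hnear : pd1 (ψ ∘ F) j =ᶠ[𝓝 x] fun y => deriv ψ (F y) * pd1 F j y := by
    filter_upwards [hF.continuousAt.eventually (hψ.eventually (by simp)), hF.eventually (by simp)]
      with y hψy hFy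
    exact pd1_comp (hψy.differentiableAt (by simp)) (hFy.differentiableAt (by simp)) j
  have hprod : HasFDerivAt (fun y => deriv ψ (F y) * pd1 F j y) _ x :=
    (hψ'.hasDerivAt.comp_hasFDerivAt x (hF.differentiableAt (by simp)).hasFDerivAt).mul
      (hF' j).hasFDerivAt
  simp only [hessM, of_apply, Matrix.add_apply, Matrix.smul_apply, vecMulVec_apply, gradv,
    smul_eq_mul]
  rw [pd1, hnear.fderiv_eq, hprod.fderiv]
  simp only [Function.comp_apply, pd1, _root_.add_apply, _root_.smul_apply, smul_eq_mul]
  ring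

theorem Uval_comp [Nonempty ι] (hψ : ContDiffAt ℝ 2 ψ (F x)) (hF : ContDiffAt ℝ 2 F x) :
    Uval (ψ ∘ F) x = deriv ψ (F x) ^ (Fintype.card ι + 1) * Uval F x := by
  rw [Uval, Nvec, gradv_comp (hψ.differentiableAt (by simp)) (hF.differentiableAt (by simp)),
    hessM_comp hψ hF, dotProduct_adjugate_smul_add_vecMulVec, Uval, Nvec]

end Reparametrization

theorem stmt6_general (n : ℕ)
    (Ω : Set (Fin (n+1) → ℝ)) (hΩ : IsOpen Ω)
    (F : (Fin (n+1) → ℝ) → ℝ) (hF : ContDiffOn ℝ (⊤ : ℕ∞) F Ω)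
    (I : Set ℝ) (hIopen : IsOpen I) (hFI : F '' Ω ⊆ I)
    (ψ : ℝ → ℝ) (hψ : ContDiffOn ℝ (⊤ : ℕ∞) ψ I)
    (hψ' : ∀ t ∈ I, deriv ψ t ≠ 0) :
    (∀ x ∈ Ω, Uval (ψ ∘ F) x = (deriv ψ (F x)) ^ (n+2) * Uval F x) ∧
    ((∀ x ∈ Ω, Uval F x ≠ 0) → ∀ x ∈ Ω, Uval (ψ ∘ F) x ≠ 0) := by
  have hFI' : ∀ x ∈ Ω, F x ∈ I := fun x hx => hFI ⟨x, hx, rfl⟩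
  have h2 : (2 : WithTop ℕ∞) ≤ ((⊤ : ℕ∞) : WithTop ℕ∞) := WithTop.coe_le_coe.mpr le_top
  have hUval : ∀ x ∈ Ω, Uval (ψ ∘ F) x = deriv ψ (F x) ^ (n+2) * Uval F x := fun x hx => by
    simpa using Uval_comp ((hψ.contDiffAt (hIopen.mem_nhds (hFI' x hx))).of_le h2)
      ((hF.contDiffAt (hΩ.mem_nhds hx)).of_le h2)
  refine ⟨hUval, fun hUF x hx => ?_⟩
  rw [hUval x hx]
  exact mul_ne_zero (pow_ne_zero _ (hψ' _ (hFI' x hx))) (hUF x hx)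

/-- behaviour of `U(F)` under external reparameterization:
`U(ψ∘F) = (ψ'∘F)^{n+2} · U(F)`; in particular nonvanishing of `U(F)` is preserved. -/
theorem stmt6 (n : ℕ) (hn : 1 ≤ n)
    (Ω : Set (Fin (n+1) → ℝ)) (hΩ : IsOpen Ω)
    (F : (Fin (n+1) → ℝ) → ℝ) (hF : ContDiffOn ℝ (⊤ : ℕ∞) F Ω)
    (I : Set ℝ) (hIopen : IsOpen I) (hIconn : I.OrdConnected) (hFI : F '' Ω ⊆ I)
    (ψ : ℝ → ℝ) (hψ : ContDiffOn ℝ (⊤ : ℕ∞) ψ I)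
    (hψ' : ∀ t ∈ I, deriv ψ t ≠ 0) :
    (∀ x ∈ Ω, Uval (ψ ∘ F) x = (deriv ψ (F x)) ^ (n+2) * Uval F x) ∧
    ((∀ x ∈ Ω, Uval F x ≠ 0) → ∀ x ∈ Ω, Uval (ψ ∘ F) x ≠ 0) :=
  stmt6_general n Ω hΩ F hF I hIopen hFI ψ hψ hψ'
end

section
/- Let n ≥ 1, let F be a C^∞ function on a connected open set Ω ⊆ ℝ^{n+1}, and suppose U(F) is equal on Ω to a nonzero constant κ. Then the equiaffine normal field satisfies 𝔑(F) = −|κ|^{1/(n+2)}·κ⁻¹·N(F) = −sign(κ)·|κ|^{−(n+1)/(n+2)}·N(F) on Ω, and ⟨∇F(x), 𝔑(F)(x)⟩ = −|κ|^{1/(n+2)} for all x ∈ Ω. Consequently, any differentiable curve φ : J → Ω (J ⊆ ℝ an interval containing 0) solving the affine normal flow φ′(t) = 𝔑(F)(φ(t)) satisfies F(φ(t)) = F(φ(0)) − |κ|^{1/(n+2)}·t for all t ∈ J; in particular the flow of 𝔑(F) carries level sets of F to level sets of F. -/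
/-! Constancy of `U(F)` makes `μ(F) = ∇ log |U(F)| / (n+2)` vanish, which kills the `σ(F)`-term
of `𝔑(F)`. What remains is a multiple of `N(F)`, and `⟨∇F, N(F)⟩ = U(F) = κ`, so along a flow line
`(F ∘ φ)' = ⟨∇F, 𝔑(F)⟩` is the constant `-|κ|^{1/(n+2)}`. -/

open Matrix

/-- The matrix `σ(F)` of the context, computed with the choice `q = 1` (it is
independent of the choice of nonvanishing `q`). -/
noncomputable def sigmaF {n : ℕ} (F : (Fin (n+1) → ℝ) → ℝ) (x : Fin (n+1) → ℝ) :
    Matrix (Fin (n+1)) (Fin (n+1)) ℝ :=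
  (hessM F x - ((Uval F x)⁻¹ * Hdet F x) • Matrix.vecMulVec (gradv F x) (gradv F x)
      + (Uval F x)⁻¹ • Matrix.vecMulVec (gradv F x) (gradv F x))⁻¹
    - (Uval F x)⁻¹ • Matrix.vecMulVec (Nvec F x) (Nvec F x)

/-- The one-form `μ(F) = (n+2)⁻¹ ∇(log |U(F)|)`. -/
noncomputable def muF (n : ℕ) (F : (Fin (n+1) → ℝ) → ℝ) (x : Fin (n+1) → ℝ) :
    Fin (n+1) → ℝ :=
  ((n : ℝ) + 2)⁻¹ • gradv (fun y => Real.log |Uval F y|) x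

/-- The equiaffine normal field
`𝔑(F) = −|U(F)|^{1/(n+2)} U(F)⁻¹ N(F) − |U(F)|^{1/(n+2)} σ(F) μ(F)`. -/
noncomputable def EANormal (n : ℕ) (F : (Fin (n+1) → ℝ) → ℝ) (x : Fin (n+1) → ℝ) :
    Fin (n+1) → ℝ :=
  (-(|Uval F x| ^ ((1 : ℝ)/((n : ℝ)+2)) * (Uval F x)⁻¹)) • Nvec F x
    - (|Uval F x| ^ ((1 : ℝ)/((n : ℝ)+2))) • (sigmaF F x *ᵥ muF n F x)

lemma fderiv_apply_eq_gradv_dotProduct {ι : Type*} [Fintype ι] [DecidableEq ι]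
    (F : (ι → ℝ) → ℝ) (x v : ι → ℝ) :
    fderiv ℝ F x v = gradv F x ⬝ᵥ v := by
  conv_lhs => rw [show v = ∑ i, v i • (Pi.single i 1 : ι → ℝ) by
    ext j; simp [Pi.single_apply]]
  simp [dotProduct, gradv, pd1, mul_comm]

lemma gradv_eq_zero_of_eventuallyEq_const {ι : Type*} [Fintype ι] [DecidableEq ι]
    {f : (ι → ℝ) → ℝ} {x : ι → ℝ} {c : ℝ} (hf : f =ᶠ[nhds x] fun _ => c) :
    gradv f x = 0 := by
  ext i
  simp [gradv, pd1, hf.fderiv_eq]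

lemma muF_eq_zero_of_Uval_const {n : ℕ} {Ω : Set (Fin (n+1) → ℝ)} (hΩ : IsOpen Ω)
    {F : (Fin (n+1) → ℝ) → ℝ} {κ : ℝ} (hUκ : ∀ x ∈ Ω, Uval F x = κ)
    {x : Fin (n+1) → ℝ} (hx : x ∈ Ω) :
    muF n F x = 0 := by
  have hlogU : (fun y => Real.log |Uval F y|) =ᶠ[nhds x] fun _ => Real.log |κ| := by
    filter_upwards [hΩ.mem_nhds hx] with y hy
    rw [hUκ y hy]
  rw [muF, gradv_eq_zero_of_eventuallyEq_const hlogU, smul_zero]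

lemma EANormal_eq_smul_Nvec_of_muF_eq_zero {n : ℕ} {F : (Fin (n+1) → ℝ) → ℝ}
    {x : Fin (n+1) → ℝ} (hμ : muF n F x = 0) :
    EANormal n F x
      = (-(|Uval F x| ^ ((1 : ℝ)/((n : ℝ)+2)) * (Uval F x)⁻¹)) • Nvec F x := by
  rw [EANormal, hμ, mulVec_zero, smul_zero, sub_zero]

lemma gradv_dotProduct_EANormal_of_muF_eq_zero {n : ℕ} {F : (Fin (n+1) → ℝ) → ℝ}
    {x : Fin (n+1) → ℝ} (hU : Uval F x ≠ 0) (hμ : muF n F x = 0) :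
    gradv F x ⬝ᵥ EANormal n F x = -|Uval F x| ^ ((1 : ℝ)/((n : ℝ)+2)) := by
  rw [EANormal_eq_smul_Nvec_of_muF_eq_zero hμ, dotProduct_smul, ← Uval, smul_eq_mul]
  field_simp

lemma abs_rpow_mul_inv_eq_sign_mul {κ : ℝ} (hκ : κ ≠ 0) (a : ℝ) :
    |κ| ^ a * κ⁻¹ = Real.sign κ * |κ| ^ (a - 1) := by
  have hinv : κ⁻¹ = Real.sign κ * |κ|⁻¹ := by
    rcases hκ.lt_or_gt with h | h
    · rw [Real.sign_of_neg h, abs_of_neg h]; field_simp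
    · rw [Real.sign_of_pos h, abs_of_pos h, one_mul]
  rw [hinv, Real.rpow_sub (abs_pos.2 hκ), Real.rpow_one]
  ring

lemma eq_sub_mul_of_hasDerivWithinAt_const {J : Set ℝ} (hJ : J.OrdConnected)
    {f : ℝ → ℝ} {c : ℝ} (hf : ∀ t ∈ J, HasDerivWithinAt f (-c) J t)
    {s t : ℝ} (hs : s ∈ J) (ht : t ∈ J) :
    f t = f s - c * (t - s) := by
  have hder : ∀ u ∈ J, HasDerivWithinAt (fun u => f u + c * u) 0 J u := fun u hu => by
    simpa using (hf u hu).fun_add ((hasDerivWithinAt_id u J).const_mul c)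
  have hle := hJ.convex.norm_image_sub_le_of_norm_hasDerivWithin_le (C := 0) hder
    (fun _ _ => by simp) hs ht
  rw [zero_mul, norm_le_zero_iff, sub_eq_zero] at hle
  linarith

theorem stmt12_general (n : ℕ)
    (Ω : Set (Fin (n+1) → ℝ)) (hΩ : IsOpen Ω)
    (F : (Fin (n+1) → ℝ) → ℝ) (hF : ContDiffOn ℝ (⊤ : ℕ∞) F Ω)
    (κ : ℝ) (hκ : κ ≠ 0) (hUκ : ∀ x ∈ Ω, Uval F x = κ) :
    (∀ x ∈ Ω, EANormal n F x = (-(|κ| ^ ((1 : ℝ)/((n : ℝ)+2)) * κ⁻¹)) • Nvec F x) ∧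
    ((-(|κ| ^ ((1 : ℝ)/((n : ℝ)+2)) * κ⁻¹))
      = -(Real.sign κ * |κ| ^ (-((n : ℝ)+1)/((n : ℝ)+2)))) ∧
    (∀ x ∈ Ω, gradv F x ⬝ᵥ EANormal n F x = -|κ| ^ ((1 : ℝ)/((n : ℝ)+2))) ∧
    (∀ J : Set ℝ, J.OrdConnected → (0 : ℝ) ∈ J →
      ∀ φ : ℝ → (Fin (n+1) → ℝ), (∀ t ∈ J, φ t ∈ Ω) →
        (∀ t ∈ J, HasDerivWithinAt φ (EANormal n F (φ t)) J t) →
        ∀ t ∈ J, F (φ t) = F (φ 0) - |κ| ^ ((1 : ℝ)/((n : ℝ)+2)) * t) := by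
  have hμ x (hx : x ∈ Ω) := muF_eq_zero_of_Uval_const hΩ hUκ hx
  have hdot : ∀ x ∈ Ω, gradv F x ⬝ᵥ EANormal n F x = -|κ| ^ ((1 : ℝ)/((n : ℝ)+2)) :=
    fun x hx => by
      rw [gradv_dotProduct_EANormal_of_muF_eq_zero (hUκ x hx ▸ hκ) (hμ x hx), hUκ x hx]
  refine ⟨fun x hx => by rw [EANormal_eq_smul_Nvec_of_muF_eq_zero (hμ x hx), hUκ x hx],
    ?_, hdot, ?_⟩
  · rw [abs_rpow_mul_inv_eq_sign_mul hκ]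
    congr 4
    field_simp
    ring
  · intro J hJ h0J φ hφΩ hφ t ht
    have hFφ : ∀ s ∈ J, HasDerivWithinAt (F ∘ φ) (-|κ| ^ ((1 : ℝ)/((n : ℝ)+2))) J s :=
      fun s hs => by
        have hFdiff : DifferentiableAt ℝ F (φ s) :=
          (hF.contDiffAt (hΩ.mem_nhds (hφΩ s hs))).differentiableAt (by simp)
        have := hFdiff.hasFDerivAt.comp_hasDerivWithinAt s (hφ s hs)
        rwa [fderiv_apply_eq_gradv_dotProduct, hdot _ (hφΩ s hs)] at this
    simpa using eq_sub_mul_of_hasDerivWithinAt_const hJ hFφ h0J ht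

/-- if `U(F) ≡ κ ≠ 0` on `Ω` then
`𝔑(F) = −|κ|^{1/(n+2)} κ⁻¹ N(F) = −sign(κ)|κ|^{−(n+1)/(n+2)} N(F)`,
`⟨∇F, 𝔑(F)⟩ = −|κ|^{1/(n+2)}`, and any solution of the affine normal flow
`φ' = 𝔑(F)∘φ` satisfies `F(φ(t)) = F(φ(0)) − |κ|^{1/(n+2)} t`, so the flow carries
level sets of `F` to level sets of `F`. -/
theorem stmt12 (n : ℕ) (hn : 1 ≤ n)
    (Ω : Set (Fin (n+1) → ℝ)) (hΩ : IsOpen Ω) (hΩconn : IsConnected Ω)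
    (F : (Fin (n+1) → ℝ) → ℝ) (hF : ContDiffOn ℝ (⊤ : ℕ∞) F Ω)
    (κ : ℝ) (hκ : κ ≠ 0) (hUκ : ∀ x ∈ Ω, Uval F x = κ) :
    (∀ x ∈ Ω, EANormal n F x = (-(|κ| ^ ((1 : ℝ)/((n : ℝ)+2)) * κ⁻¹)) • Nvec F x) ∧
    ((-(|κ| ^ ((1 : ℝ)/((n : ℝ)+2)) * κ⁻¹))
      = -(Real.sign κ * |κ| ^ (-((n : ℝ)+1)/((n : ℝ)+2)))) ∧
    (∀ x ∈ Ω, gradv F x ⬝ᵥ EANormal n F x = -|κ| ^ ((1 : ℝ)/((n : ℝ)+2))) ∧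
    (∀ J : Set ℝ, J.OrdConnected → (0 : ℝ) ∈ J →
      ∀ φ : ℝ → (Fin (n+1) → ℝ), (∀ t ∈ J, φ t ∈ Ω) →
        (∀ t ∈ J, HasDerivWithinAt φ (EANormal n F (φ t)) J t) →
        ∀ t ∈ J, F (φ t) = F (φ 0) - |κ| ^ ((1 : ℝ)/((n : ℝ)+2)) * t) :=
  stmt12_general n Ω hΩ F hF κ hκ hUκ
end

section
/- Let n ≥ 1, let λ ∈ ℝ, and let F be a C^∞ function on ℝ^{n+1} ∖ {0} that is positively homogeneous of degree λ, i.e. F(tx) = t^λ·F(x) for all t > 0 and x ≠ 0. Then for every x ≠ 0: (λ−1)·N(F)(x) = H(F)(x)·x and (λ−1)·U(F)(x) = λ·H(F)(x)·F(x). -/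
/-!
Differentiating `F (t • x) = t ^ λ * F x` in `x` shows that every partial derivative `∂ⱼF` is
homogeneous of degree `λ - 1`, and differentiating a homogeneous function in `t` at `t = 1` gives
Euler's identity. Applied to `F` it reads `∇F · x = λ F`; applied to the `∂ⱼF` and combined with
the symmetry of the Hessian it reads `Hess F · x = (λ - 1) ∇F`. Multiplying the latter by
`adj (Hess F)` gives `(λ - 1) N(F) = H(F) x`, and pairing this with `∇F` gives the second identity.
-/

open Matrix

def IsPosHomogeneous {E : Type*} [AddCommGroup E] [Module ℝ E] (G : E → ℝ) (μ : ℝ) : Prop :=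
  ∀ t : ℝ, 0 < t → ∀ x : E, x ≠ 0 → G (t • x) = t ^ μ * G x

namespace IsPosHomogeneous

variable {E : Type*} [NormedAddCommGroup E] [NormedSpace ℝ E] {G : E → ℝ} {μ : ℝ}

theorem fderiv_apply_self (hG : IsPosHomogeneous G μ) {x : E} (hx : x ≠ 0)
    (hd : DifferentiableAt ℝ G x) : fderiv ℝ G x x = μ * G x := by
  have hcomp : HasDerivAt (fun t : ℝ => G (t • x)) (fderiv ℝ G x x) 1 := by
    have hline : HasDerivAt (fun t : ℝ => t • x) x 1 := by
      simpa using (hasDerivAt_id (1 : ℝ)).smul_const x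
    exact hd.hasFDerivAt.comp_hasDerivAt_of_eq 1 hline (one_smul ℝ x).symm
  have hpow : HasDerivAt (fun t : ℝ => t ^ μ * G x) (μ * G x) 1 := by
    simpa using
      (Real.hasDerivAt_rpow_const (x := 1) (p := μ) (Or.inl one_ne_zero)).mul_const (G x)
  have heq : (fun t : ℝ => t ^ μ * G x) =ᶠ[nhds 1] fun t => G (t • x) := by
    filter_upwards [eventually_gt_nhds one_pos] with t ht
    exact (hG t ht x hx).symm
  exact hcomp.unique (hpow.congr_of_eventuallyEq heq.symm)

theorem fderiv_apply (hG : IsPosHomogeneous G μ) (v : E) :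
    IsPosHomogeneous (fun y => fderiv ℝ G y v) (μ - 1) := by
  intro t ht x hx
  have heq : (fun y => G (t • y)) =ᶠ[nhds x] (t ^ μ) • G := by
    filter_upwards [isOpen_ne.mem_nhds hx] with y hy
    exact hG t ht y hy
  -- no differentiability is needed: both `fderiv` rules below hold unconditionally
  have hscaled : t * fderiv ℝ G (t • x) v = t ^ μ * fderiv ℝ G x v := by
    simpa [fderiv_comp_smul, fderiv_const_smul_field] using
      congrArg (fun L : E →L[ℝ] ℝ => L v) heq.fderiv_eq
  rw [Real.rpow_sub ht, Real.rpow_one]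
  field_simp
  linarith

end IsPosHomogeneous

theorem ContDiffAt.differentiableAt_fderiv {E F : Type*} [NormedAddCommGroup E] [NormedSpace ℝ E]
    [NormedAddCommGroup F] [NormedSpace ℝ F] {f : E → F} {x : E} (hf : ContDiffAt ℝ 2 f x) :
    DifferentiableAt ℝ (fderiv ℝ f) x :=
  (hf.fderiv_right (m := 1) (by norm_num)).differentiableAt one_ne_zero

section Hessian

variable {ι : Type*} [Fintype ι] [DecidableEq ι]

theorem gradv_dotProduct (G : (ι → ℝ) → ℝ) (x v : ι → ℝ) :
    gradv G x ⬝ᵥ v = fderiv ℝ G x v := by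
  conv_rhs => rw [pi_eq_sum_univ' v, map_sum]
  simp [dotProduct, gradv, pd1, mul_comm]

theorem transpose_hessM_mulVec (F : (ι → ℝ) → ℝ) (x v : ι → ℝ) :
    (hessM F x)ᵀ *ᵥ v = fun j => fderiv ℝ (pd1 F j) x v :=
  funext fun j => gradv_dotProduct (pd1 F j) x v

theorem hessM_eq_fderiv_fderiv {F : (ι → ℝ) → ℝ} {x : ι → ℝ}
    (hF : DifferentiableAt ℝ (fderiv ℝ F) x) (i j : ι) :
    hessM F x i j = fderiv ℝ (fderiv ℝ F) x (Pi.single i 1) (Pi.single j 1) := by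
  change fderiv ℝ (fun y => fderiv ℝ F y (Pi.single j 1)) x (Pi.single i 1) = _
  simp [fderiv_clm_apply hF (differentiableAt_const _)]

theorem hessM_isSymm {F : (ι → ℝ) → ℝ} {x : ι → ℝ} (hF : ContDiffAt ℝ 2 F x) :
    (hessM F x).IsSymm := by
  have hsymm : IsSymmSndFDerivAt ℝ F x :=
    hF.isSymmSndFDerivAt (by simp [minSmoothness_of_isRCLikeNormedField])
  ext i j
  simp only [transpose_apply, hessM_eq_fderiv_fderiv hF.differentiableAt_fderiv, hsymm _ _]

theorem IsPosHomogeneous.hessM_mulVec_self {F : (ι → ℝ) → ℝ} {μ : ℝ}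
    (hhom : IsPosHomogeneous F μ) {x : ι → ℝ} (hx : x ≠ 0) (hF : ContDiffAt ℝ 2 F x) :
    hessM F x *ᵥ x = (μ - 1) • gradv F x := by
  rw [← (hessM_isSymm hF).eq, transpose_hessM_mulVec]
  funext j
  exact (hhom.fderiv_apply _).fderiv_apply_self hx
    (hF.differentiableAt_fderiv.clm_apply (differentiableAt_const _))

end Hessian

theorem Matrix.smul_adjugate_mulVec_of_mulVec_eq {n R : Type*} [Fintype n] [DecidableEq n]
    [CommRing R] {A : Matrix n n R} {x g : n → R} {c : R} (h : A *ᵥ x = c • g) :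
    c • (A.adjugate *ᵥ g) = A.det • x := by
  rw [← mulVec_smul, ← h, mulVec_mulVec, adjugate_mul, smul_mulVec, one_mulVec]

theorem stmt13_general (n : ℕ)
    (F : (Fin (n+1) → ℝ) → ℝ)
    (hF : ContDiffOn ℝ (⊤ : ℕ∞) F {x : Fin (n+1) → ℝ | x ≠ 0})
    (lam : ℝ)
    (hhom : ∀ t : ℝ, 0 < t → ∀ x : Fin (n+1) → ℝ, x ≠ 0 →
      F (t • x) = t ^ lam * F x) :
    ∀ x : Fin (n+1) → ℝ, x ≠ 0 →
      (lam - 1) • Nvec F x = Hdet F x • x ∧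
      (lam - 1) * Uval F x = lam * Hdet F x * F x := by
  intro x hx
  have hF2 : ContDiffAt ℝ 2 F x :=
    (hF.contDiffAt (isOpen_ne.mem_nhds hx)).of_le (by norm_cast)
  have hN : (lam - 1) • Nvec F x = Hdet F x • x :=
    smul_adjugate_mulVec_of_mulVec_eq (IsPosHomogeneous.hessM_mulVec_self hhom hx hF2)
  have hEuler : gradv F x ⬝ᵥ x = lam * F x := by
    rw [gradv_dotProduct]
    exact IsPosHomogeneous.fderiv_apply_self hhom hx (hF2.differentiableAt two_ne_zero)
  refine ⟨hN, ?_⟩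
  calc (lam - 1) * Uval F x = gradv F x ⬝ᵥ ((lam - 1) • Nvec F x) := by
        rw [dotProduct_smul, smul_eq_mul, Uval]
    _ = Hdet F x * (gradv F x ⬝ᵥ x) := by rw [hN, dotProduct_smul, smul_eq_mul]
    _ = lam * Hdet F x * F x := by rw [hEuler]; ring

/-- for `F` positively homogeneous of degree `λ` on `ℝ^{n+1} ∖ {0}`,
`(λ−1) N(F) = H(F)·x` and `(λ−1) U(F) = λ H(F) F`. -/
theorem stmt13 (n : ℕ) (hn : 1 ≤ n)
    (F : (Fin (n+1) → ℝ) → ℝ)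
    (hF : ContDiffOn ℝ (⊤ : ℕ∞) F {x : Fin (n+1) → ℝ | x ≠ 0})
    (lam : ℝ)
    (hhom : ∀ t : ℝ, 0 < t → ∀ x : Fin (n+1) → ℝ, x ≠ 0 →
      F (t • x) = t ^ lam * F x) :
    ∀ x : Fin (n+1) → ℝ, x ≠ 0 →
      (lam - 1) • Nvec F x = Hdet F x • x ∧
      (lam - 1) * Uval F x = lam * Hdet F x * F x :=
  stmt13_general n F hF lam hhom
end

section
/- Let n ≥ 1, let M ⊆ ℝⁿ be open, let A : M → ℝ^{n+1} be C^∞ with components a¹,…,a^{n+1}, let Q ∈ C^∞(M), and define F : M × ℝ^{n+1} → ℝ by F(u,x) = Σ_{i=1}^{n+1} aⁱ(u)·xᵢ + Q(u), a C^∞ function on an open subset of ℝ^{2n+1} with coordinates (u¹,…,uⁿ, x₁,…,x_{n+1}). Let dA(u) be the (n+1)×n Jacobian matrix of A, let dA^{(i)}(u) be the determinant of the n×n matrix obtained from dA(u) by deleting its i-th row, and let V(u) ∈ ℝ^{2n+1} be the vector whose u-components are 0 and whose xᵢ-component is (−1)^{i+1}·dA^{(i)}(u). Then at every (u,x) ∈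 M × ℝ^{n+1}: (i) Hess F(u,x)·V(u) = 0; (ii) adj(Hess F(u,x)) = (−1)ⁿ·V(u)V(u)ᵀ; (iii) U(F)(u,x) = (−1)ⁿ·( det[A(u) | dA(u)] )², where det[A | dA] denotes the determinant of the (n+1)×(n+1) matrix whose first column is A(u) and whose remaining columns are those of dA(u). Consequently U(F) is nowhere zero on M × ℝ^{n+1} if and only if det[A | dA] is nowhere zero on M, i.e. if and only if A is a centroaffine immersion. -/
open Matrix

/-- The Jacobian matrix of a map `A : ℝ^m → ℝ^k`. -/
noncomputable def Jac {m k : ℕ} (A : (Fin m → ℝ) → (Fin k → ℝ)) (u : Fin m → ℝ) :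
    Matrix (Fin k) (Fin m) ℝ :=
  Matrix.of fun i j => fderiv ℝ (fun v => A v i) u (Pi.single j 1)

/-- `dA^{(i)}`: the determinant of the `m×m` matrix obtained from the Jacobian of
`A : ℝ^m → ℝ^{m+1}` by deleting its `i`-th row. -/
noncomputable def minorDel {m : ℕ} (A : (Fin m → ℝ) → (Fin (m+1) → ℝ))
    (i : Fin (m+1)) (u : Fin m → ℝ) : ℝ :=
  ((Jac A u).submatrix i.succAbove id).det

/-- `det[A | dA]`: the determinant of the `(m+1)×(m+1)` matrix whose first column is
`A(u)` and whose remaining columns are those of the Jacobian of `A`. -/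
noncomputable def AdA {m : ℕ} (A : (Fin m → ℝ) → (Fin (m+1) → ℝ)) (u : Fin m → ℝ) : ℝ :=
  (Matrix.of fun i j =>
    (Fin.cons (A u) (fun k i' => Jac A u i' k) : Fin (m+1) → (Fin (m+1) → ℝ)) j i).det

/-!
Because `F` is affine in `x`, its Hessian is the bordered matrix `[[P, dAᵀ], [dA, 0]]` and
`∂F/∂xᵢ = aⁱ`. The vector `w` of signed maximal minors of `dA` satisfies `wᵀ dA = 0` (Laplace
expansion of `dA` bordered by one of its own columns), which is (i). For (ii), a cofactor that
deletes a `u`-row or a `u`-column keeps the zero `(n+1)×(n+1)` block, whose `n + 1` rows then lie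
in an `n`-dimensional space, so it vanishes; deleting the `x`-row `q` and the `x`-column `p` leaves
`[[P, dA_pᵀ], [dA_q, 0]]` with square off-diagonal blocks, of determinant
`(-1)ⁿ det dA_p det dA_q`. Then (iii) follows from (ii), since `⟨V, ∇F⟩ = ⟨w, A⟩ = det[A | dA]`
by Laplace expansion along the first column.
-/

open Matrix

theorem Equiv.Perm.sign_sumComm_self (α : Type*) [Fintype α] [DecidableEq α] :
    Equiv.Perm.sign (Equiv.sumComm α α) = (-1) ^ Fintype.card α := by
  rw [← Equiv.Perm.sign_eq_sign_of_equiv (Equiv.prodCongrLeft fun _ => Equiv.swap false true) _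
    (Equiv.boolProdEquivSum α) (by rintro ⟨_ | _, a⟩ <;> rfl), Equiv.Perm.sign_prodCongrLeft]
  simp

theorem Fin.natAdd_succAbove_finSumFinEquiv {m n : ℕ} (q : Fin (n + 1)) (x : Fin m ⊕ Fin n) :
    (Fin.natAdd m q).succAbove (finSumFinEquiv x) = finSumFinEquiv (Sum.map id q.succAbove x) := by
  rcases x with j | r
  · rw [Fin.succAbove_of_castSucc_lt _ _ (by
      simp only [finSumFinEquiv_apply_left, Fin.lt_def, Fin.val_castSucc, Fin.val_castAdd,
        Fin.val_natAdd]
      omega)]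
    ext; simp
  · rcases lt_or_ge r.castSucc q with h | h
    · rw [Fin.succAbove_of_castSucc_lt _ _ (by simpa [Fin.lt_def] using h),
        Sum.map_inr, Fin.succAbove_of_castSucc_lt _ _ h]
      ext; simp
    · rw [Fin.succAbove_of_le_castSucc _ _ (by simpa [Fin.le_def] using h),
        Sum.map_inr, Fin.succAbove_of_le_castSucc _ _ h]
      ext
      simp only [Fin.val_natAdd, finSumFinEquiv_apply_right, Fin.val_succ]
      omega

namespace Matrix

section CommRing
variable {R : Type*} [CommRing R]

theorem det_fromBlocks_zero₂₂_of_square {m : Type*} [Fintype m] [DecidableEq m]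
    (A B C : Matrix m m R) :
    (fromBlocks A B C 0).det = (-1) ^ Fintype.card m * (B.det * C.det) := by
  have hswap : (fromBlocks A B C 0).submatrix id (Equiv.sumComm m m) = fromBlocks B A 0 C := by
    ext (i | i) (j | j) <;> rfl
  have hperm := det_permute' (Equiv.sumComm m m) (fromBlocks A B C 0)
  rw [hswap, det_fromBlocks_zero₂₁, Equiv.Perm.sign_sumComm_self] at hperm
  rw [hperm]
  push_cast
  rw [← mul_assoc, ← pow_add, ← two_mul, pow_mul]
  simp

variable {n : ℕ}

/-- For `J = dA` these are the `x`-components `(-1)^i dA^{(i)}` of the vector `V`. -/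
def signedMinors (J : Matrix (Fin (n + 1)) (Fin n) R) (i : Fin (n + 1)) : R :=
  (-1) ^ (i : ℕ) * (J.submatrix i.succAbove id).det

theorem signedMinors_vecMul (J : Matrix (Fin (n + 1)) (Fin n) R) : J.signedMinors ᵥ* J = 0 := by
  ext j
  let K : Matrix (Fin (n + 1)) (Fin (n + 1)) R := of fun r => Fin.cons (J r j) (J r)
  have hK : K.det = 0 := det_zero_of_column_eq (Fin.succ_ne_zero j).symm fun r => rfl
  have hminor (i : Fin (n + 1)) :
      K.submatrix i.succAbove Fin.succ = J.submatrix i.succAbove id := by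
    ext; simp [K]
  rw [det_succ_column_zero] at hK
  simpa [vecMul, dotProduct, signedMinors, hminor, K, mul_right_comm] using hK

theorem fromBlocks_transpose_zero_mulVec_signedMinors (P : Matrix (Fin n) (Fin n) R)
    (J : Matrix (Fin (n + 1)) (Fin n) R) :
    fromBlocks P Jᵀ J 0 *ᵥ Sum.elim 0 J.signedMinors = 0 := by
  rw [fromBlocks_mulVec]
  ext (j | i) <;> simp [mulVec_transpose, signedMinors_vecMul]

theorem adjugate_fromBlocks_transpose_zero_inr_inr (P : Matrix (Fin n) (Fin n) R)
    (J : Matrix (Fin (n + 1)) (Fin n) R) (p q : Fin (n + 1)) :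
    adjugate (fromBlocks P Jᵀ J 0) (.inr p) (.inr q) =
      (-1) ^ n * (J.signedMinors p * J.signedMinors q) := by
  set H := fromBlocks P Jᵀ J 0
  -- `Fin n ⊕ Fin (n + 1) ≃ Fin (n + n + 1)` puts the `x`-indices last, where cofactors are
  -- computed by `adjugate_fin_succ_eq_det_submatrix`.
  have hadj : adjugate H (.inr p) (.inr q) =
      adjugate (H.submatrix finSumFinEquiv.symm finSumFinEquiv.symm) (Fin.natAdd n p)
        (Fin.natAdd n q) := by
    rw [adjugate_submatrix_equiv_self]; simp
  have hminor : (H.submatrix finSumFinEquiv.symm finSumFinEquiv.symm).submatrix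
      (Fin.natAdd n q).succAbove (Fin.natAdd n p).succAbove =
      (fromBlocks P (J.submatrix p.succAbove id)ᵀ (J.submatrix q.succAbove id) 0).submatrix
        finSumFinEquiv.symm finSumFinEquiv.symm := by
    ext k l
    obtain ⟨k, rfl⟩ := finSumFinEquiv.surjective k
    obtain ⟨l, rfl⟩ := finSumFinEquiv.surjective l
    simp only [submatrix_apply, Fin.natAdd_succAbove_finSumFinEquiv, Equiv.symm_apply_apply]
    rcases k with k | k <;> rcases l with l | l <;> rfl
  rw [hadj, adjugate_fin_succ_eq_det_submatrix, hminor, det_submatrix_equiv_self,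
    det_fromBlocks_zero₂₂_of_square, det_transpose, signedMinors, signedMinors]
  simp only [Fin.val_natAdd, Fintype.card_fin]
  rw [show n + q + (n + p) = 2 * n + (p + q) by ring, pow_add, pow_mul, neg_one_sq, one_pow,
    one_mul, pow_add]
  ring

end CommRing

section Field
variable {K : Type*} [Field K]

theorem det_eq_zero_of_inr_inr_eq_zero_of_card_lt {ι κ : Type*} [Fintype ι] [Fintype κ]
    [DecidableEq ι] [DecidableEq κ] (M : Matrix (ι ⊕ κ) (ι ⊕ κ) K)
    (hM : ∀ k l, M (.inr k) (.inr l) = 0) (hcard : Fintype.card ι < Fintype.card κ) :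
    M.det = 0 := by
  let C : Matrix κ ι K := of fun k i => M (.inr k) (.inl i)
  obtain ⟨c, hc, hc0⟩ := (Submodule.ne_bot_iff _).mp
    (LinearMap.ker_ne_bot_of_finrank_lt (f := C.vecMulLinear) (by simpa using hcard))
  refine exists_vecMul_eq_zero_iff.mp ⟨Sum.elim 0 c, fun h => hc0 ?_, ?_⟩
  · funext l; simpa using congrFun h (.inr l)
  ext (i | l)
  · simpa [vecMul, dotProduct, C] using congrFun (show c ᵥ* C = 0 from hc) i
  · simp [vecMul, dotProduct, hM]

theorem adjugate_fromBlocks_transpose_zero {n : ℕ}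
    (P : Matrix (Fin n) (Fin n) K) (J : Matrix (Fin (n + 1)) (Fin n) K) :
    adjugate (fromBlocks P Jᵀ J 0) =
      (-1 : K) ^ n • vecMulVec (Sum.elim 0 J.signedMinors) (Sum.elim 0 J.signedMinors) := by
  ext a b
  rcases a with j | p <;> rcases b with j' | q
  case inr.inr => simp [adjugate_fromBlocks_transpose_zero_inr_inr, vecMulVec_apply]
  all_goals
    rw [adjugate_apply, det_eq_zero_of_inr_inr_eq_zero_of_card_lt _ _ (by simp)]
    · simp [vecMulVec_apply]
    · intro k l; simp [updateRow_apply]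

end Field

theorem dotProduct_smul_vecMulVec_mulVec_self {R ι : Type*} [CommRing R] [Fintype ι]
    (c : R) (v g : ι → R) : g ⬝ᵥ ((c • vecMulVec v v) *ᵥ g) = c * (v ⬝ᵥ g) ^ 2 := by
  rw [smul_mulVec, vecMulVec_mulVec, dotProduct_smul, op_smul_eq_smul, dotProduct_smul,
    dotProduct_comm g v, smul_eq_mul, smul_eq_mul]
  ring

end Matrix

theorem AdA_eq_signedMinors_dotProduct {m : ℕ} (A : (Fin m → ℝ) → (Fin (m + 1) → ℝ))
    (u : Fin m → ℝ) : AdA A u = (Jac A u).signedMinors ⬝ᵥ A u := by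
  rw [AdA, det_succ_column_zero, dotProduct]
  refine Finset.sum_congr rfl fun i _ => ?_
  have hminor : (of fun i j => (Fin.cons (A u) (fun k i' => Jac A u i' k) :
      Fin (m + 1) → Fin (m + 1) → ℝ) j i).submatrix i.succAbove Fin.succ =
      (Jac A u).submatrix i.succAbove id := by
    ext; simp
  simp [hminor, signedMinors, mul_right_comm]

def restrictInl (ι κ : Type*) : (ι ⊕ κ → ℝ) →L[ℝ] (ι → ℝ) :=
  ContinuousLinearMap.pi fun j => ContinuousLinearMap.proj (Sum.inl j)

theorem restrictInl_single_inl {ι κ : Type*} [DecidableEq ι] [DecidableEq κ] (j : ι) (c : ℝ) :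
    restrictInl ι κ (Pi.single (Sum.inl j) c) = Pi.single j c := by
  ext; simp [restrictInl, Pi.single_apply]

theorem restrictInl_single_inr {ι κ : Type*} [DecidableEq ι] [DecidableEq κ] (i : κ) (c : ℝ) :
    restrictInl ι κ (Pi.single (Sum.inr i) c) = 0 := by
  ext; simp [restrictInl]

section Hessian
variable {ι : Type*} [Fintype ι] [DecidableEq ι] {F : (ι → ℝ) → ℝ} {x : ι → ℝ}

theorem hessM_apply_eq_fderiv_fderiv (hF : ContDiffAt ℝ 2 F x) (a b : ι) :
    hessM F x a b = fderiv ℝ (fderiv ℝ F) x (Pi.single a 1) (Pi.single b 1) := by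
  have hdiff : DifferentiableAt ℝ (fderiv ℝ F) x :=
    (hF.fderiv_right (m := 1) le_rfl).differentiableAt one_ne_zero
  change fderiv ℝ (fun w => fderiv ℝ F w (Pi.single b 1)) x (Pi.single a 1) = _
  rw [fderiv_clm_apply hdiff (differentiableAt_const _)]
  simp

theorem hessM_apply_comm (hF : ContDiffAt ℝ 2 F x) (a b : ι) :
    hessM F x a b = hessM F x b a := by
  rw [hessM_apply_eq_fderiv_fderiv hF, hessM_apply_eq_fderiv_fderiv hF,
    (hF.isSymmSndFDerivAt (by simp [minSmoothness_of_isRCLikeNormedField])).eq]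

end Hessian

section AffineInX
variable {m k : ℕ} {A : (Fin m → ℝ) → (Fin k → ℝ)} {Q : (Fin m → ℝ) → ℝ}
  {F : (Fin m ⊕ Fin k → ℝ) → ℝ} {z : Fin m ⊕ Fin k → ℝ}

theorem contDiffAt_of_eq_sum_mul_add {r : WithTop ℕ∞}
    (hF : ∀ z, F z =
      (∑ i, A (fun j => z (Sum.inl j)) i * z (Sum.inr i)) + Q (fun j => z (Sum.inl j)))
    (hA : ContDiffAt ℝ r A (fun j => z (Sum.inl j)))
    (hQ : ContDiffAt ℝ r Q (fun j => z (Sum.inl j))) :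
    ContDiffAt ℝ r F z := by
  have hπ := (restrictInl (Fin m) (Fin k)).contDiff.contDiffAt (n := r) (x := z)
  rw [show F = _ from funext hF]
  refine ContDiffAt.add (ContDiffAt.sum fun i _ => ContDiffAt.mul ?_ ?_) (hQ.comp z hπ)
  · exact (contDiff_apply ℝ ℝ i).contDiffAt.comp z (hA.comp z hπ)
  · exact (contDiff_apply ℝ ℝ (Sum.inr i)).contDiffAt

theorem pd1_inr_of_eq_sum_mul_add
    (hF : ∀ z, F z =
      (∑ i, A (fun j => z (Sum.inl j)) i * z (Sum.inr i)) + Q (fun j => z (Sum.inl j)))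
    (hFz : DifferentiableAt ℝ F z) (i : Fin k) :
    pd1 F (Sum.inr i) z = A (fun j => z (Sum.inl j)) i := by
  have hline : HasLineDerivAt ℝ F (A (fun j => z (Sum.inl j)) i) z (Pi.single (Sum.inr i) 1) := by
    have hlin : (fun t : ℝ => F (z + t • Pi.single (Sum.inr i) 1)) =
        fun t => F z + t * A (fun j => z (Sum.inl j)) i := by
      funext t
      simp only [hF, Pi.add_apply, Pi.smul_apply, smul_eq_mul, Pi.single_apply, Sum.inr.injEq,
        reduceCtorEq, if_false, mul_zero, add_zero, mul_ite, mul_one, mul_add,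
        Finset.sum_add_distrib, Finset.sum_ite_eq', Finset.mem_univ, if_true]
      ring
    rw [HasLineDerivAt, hlin]
    simpa using ((hasDerivAt_id (0 : ℝ)).mul_const (A (fun j => z (Sum.inl j)) i)).const_add (F z)
  rw [pd1, ← hFz.lineDeriv_eq_fderiv, hline.lineDeriv]

theorem hessM_apply_inr_of_eq_sum_mul_add
    (hF : ∀ z, F z =
      (∑ i, A (fun j => z (Sum.inl j)) i * z (Sum.inr i)) + Q (fun j => z (Sum.inl j)))
    (hFz : ContDiffAt ℝ 2 F z) (hA : DifferentiableAt ℝ A (fun j => z (Sum.inl j)))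
    (a : Fin m ⊕ Fin k) (i : Fin k) :
    hessM F z a (Sum.inr i) =
      fderiv ℝ (fun v => A v i) (fun j => z (Sum.inl j)) (restrictInl _ _ (Pi.single a 1)) := by
  have hpd1 : pd1 F (Sum.inr i) =ᶠ[nhds z] fun w => A (restrictInl _ _ w) i := by
    filter_upwards [hFz.eventually (by simp)] with w hw
    exact pd1_inr_of_eq_sum_mul_add hF (hw.differentiableAt two_ne_zero) i
  have hAi : DifferentiableAt ℝ (fun v => A v i) (restrictInl _ _ z) :=
    differentiableAt_pi.mp hA i
  change fderiv ℝ (pd1 F (Sum.inr i)) z (Pi.single a 1) = _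
  rw [hpd1.fderiv_eq, fderiv_fun_comp z hAi (restrictInl _ _).differentiableAt,
    ContinuousLinearMap.fderiv]
  rfl

theorem hessM_eq_fromBlocks_of_eq_sum_mul_add
    (hF : ∀ z, F z =
      (∑ i, A (fun j => z (Sum.inl j)) i * z (Sum.inr i)) + Q (fun j => z (Sum.inl j)))
    (hFz : ContDiffAt ℝ 2 F z) (hA : DifferentiableAt ℝ A (fun j => z (Sum.inl j))) :
    hessM F z = fromBlocks (hessM F z).toBlocks₁₁ (Jac A (fun j => z (Sum.inl j)))ᵀ
      (Jac A (fun j => z (Sum.inl j))) 0 := by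
  ext (j | i) (j' | i')
  · rfl
  · rw [hessM_apply_inr_of_eq_sum_mul_add hF hFz hA, restrictInl_single_inl]
    rfl
  · rw [hessM_apply_comm hFz, hessM_apply_inr_of_eq_sum_mul_add hF hFz hA,
      restrictInl_single_inl]
    rfl
  · rw [hessM_apply_inr_of_eq_sum_mul_add hF hFz hA, restrictInl_single_inr, map_zero]
    rfl

end AffineInX

section Bordered
variable {n : ℕ} {A : (Fin n → ℝ) → (Fin (n + 1) → ℝ)} {Q : (Fin n → ℝ) → ℝ}
  {F : (Fin n ⊕ Fin (n + 1) → ℝ) → ℝ} {z : Fin n ⊕ Fin (n + 1) → ℝ}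

theorem hessM_mulVec_signedMinors_eq_zero
    (hF : ∀ z, F z =
      (∑ i, A (fun j => z (Sum.inl j)) i * z (Sum.inr i)) + Q (fun j => z (Sum.inl j)))
    (hFz : ContDiffAt ℝ 2 F z) (hA : DifferentiableAt ℝ A (fun j => z (Sum.inl j))) :
    hessM F z *ᵥ Sum.elim 0 (Jac A (fun j => z (Sum.inl j))).signedMinors = 0 := by
  rw [hessM_eq_fromBlocks_of_eq_sum_mul_add hF hFz hA]
  exact fromBlocks_transpose_zero_mulVec_signedMinors _ _

theorem adjugate_hessM_eq_of_eq_sum_mul_add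
    (hF : ∀ z, F z =
      (∑ i, A (fun j => z (Sum.inl j)) i * z (Sum.inr i)) + Q (fun j => z (Sum.inl j)))
    (hFz : ContDiffAt ℝ 2 F z) (hA : DifferentiableAt ℝ A (fun j => z (Sum.inl j))) :
    (hessM F z).adjugate = (-1 : ℝ) ^ n •
      vecMulVec (Sum.elim 0 (Jac A (fun j => z (Sum.inl j))).signedMinors)
        (Sum.elim 0 (Jac A (fun j => z (Sum.inl j))).signedMinors) := by
  rw [hessM_eq_fromBlocks_of_eq_sum_mul_add hF hFz hA, adjugate_fromBlocks_transpose_zero]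

theorem Uval_eq_of_eq_sum_mul_add
    (hF : ∀ z, F z =
      (∑ i, A (fun j => z (Sum.inl j)) i * z (Sum.inr i)) + Q (fun j => z (Sum.inl j)))
    (hFz : ContDiffAt ℝ 2 F z) (hA : DifferentiableAt ℝ A (fun j => z (Sum.inl j))) :
    Uval F z = (-1 : ℝ) ^ n * AdA A (fun j => z (Sum.inl j)) ^ 2 := by
  have hgrad : gradv F z ∘ Sum.inr = A (fun j => z (Sum.inl j)) :=
    funext (pd1_inr_of_eq_sum_mul_add hF (hFz.differentiableAt two_ne_zero))
  rw [Uval, Nvec, adjugate_hessM_eq_of_eq_sum_mul_add hF hFz hA,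
    dotProduct_smul_vecMulVec_mulVec_self, dotProduct_block, Sum.elim_comp_inr, hgrad,
    AdA_eq_signedMinors_dotProduct]
  simp

end Bordered

theorem stmt15_general (n : ℕ)
    (M : Set (Fin n → ℝ)) (hM : IsOpen M)
    (A : (Fin n → ℝ) → (Fin (n+1) → ℝ)) (hA : ContDiffOn ℝ (⊤ : ℕ∞) A M)
    (Q : (Fin n → ℝ) → ℝ) (hQ : ContDiffOn ℝ (⊤ : ℕ∞) Q M)
    (F : ((Fin n ⊕ Fin (n+1)) → ℝ) → ℝ)
    (hF : ∀ z, F z = (∑ i : Fin (n+1), A (fun j => z (Sum.inl j)) i * z (Sum.inr i))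
      + Q (fun j => z (Sum.inl j)))
    (V : (Fin n → ℝ) → ((Fin n ⊕ Fin (n+1)) → ℝ))
    (hV : ∀ u, V u = Sum.elim (0 : Fin n → ℝ) (fun i : Fin (n+1) => (-1 : ℝ) ^ (i : ℕ) * minorDel A i u)) :
    (∀ z : (Fin n ⊕ Fin (n+1)) → ℝ, (fun j => z (Sum.inl j)) ∈ M →
      hessM F z *ᵥ V (fun j => z (Sum.inl j)) = 0 ∧
      (hessM F z).adjugate = ((-1 : ℝ)^n) •
        vecMulVec (V (fun j => z (Sum.inl j))) (V (fun j => z (Sum.inl j))) ∧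
      Uval F z = (-1 : ℝ)^n * (AdA A (fun j => z (Sum.inl j)))^2) ∧
    ((∀ z : (Fin n ⊕ Fin (n+1)) → ℝ, (fun j => z (Sum.inl j)) ∈ M → Uval F z ≠ 0)
      ↔ (∀ u ∈ M, AdA A u ≠ 0)) := by
  have hV' (u : Fin n → ℝ) : V u = Sum.elim (0 : Fin n → ℝ) (Jac A u).signedMinors := hV u
  have hsmooth (z : Fin n ⊕ Fin (n + 1) → ℝ) (hz : (fun j => z (Sum.inl j)) ∈ M) :
      ContDiffAt ℝ 2 F z ∧ DifferentiableAt ℝ A (fun j => z (Sum.inl j)) := by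
    have hAz := (hA.contDiffAt (hM.mem_nhds hz)).of_le (m := 2) (WithTop.coe_le_coe.mpr le_top)
    have hQz := (hQ.contDiffAt (hM.mem_nhds hz)).of_le (m := 2) (WithTop.coe_le_coe.mpr le_top)
    exact ⟨contDiffAt_of_eq_sum_mul_add hF hAz hQz, hAz.differentiableAt two_ne_zero⟩
  have hU (z) (hz : (fun j => z (Sum.inl j)) ∈ M) :=
    Uval_eq_of_eq_sum_mul_add hF (hsmooth z hz).1 (hsmooth z hz).2
  refine ⟨fun z hz => ⟨?_, ?_, hU z hz⟩, fun hUz u hu hAdA => hUz (Sum.elim u 0) hu ?_,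
    fun hAdA z hz => ?_⟩
  · rw [hV']
    exact hessM_mulVec_signedMinors_eq_zero hF (hsmooth z hz).1 (hsmooth z hz).2
  · rw [hV']
    exact adjugate_hessM_eq_of_eq_sum_mul_add hF (hsmooth z hz).1 (hsmooth z hz).2
  · rw [hU _ hu]
    simp [hAdA]
  · rw [hU z hz]
    exact mul_ne_zero (pow_ne_zero _ (by norm_num)) (pow_ne_zero _ (hAdA _ hz))

/-- for `F(u,x) = ⟨A(u),x⟩ + Q(u)` on `M × ℝ^{n+1}` (coordinates indexed
by `Fin n ⊕ Fin (n+1)`), the vector field `V` built from the signed maximal minors of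
the Jacobian of `A` lies in the radical of `Hess F`, `adj(Hess F) = (−1)ⁿ V Vᵀ`, and
`U(F) = (−1)ⁿ (det[A | dA])²`; consequently `U(F)` is nowhere zero iff `A` is a
centroaffine immersion. -/
theorem stmt15 (n : ℕ) (hn : 1 ≤ n)
    (M : Set (Fin n → ℝ)) (hM : IsOpen M)
    (A : (Fin n → ℝ) → (Fin (n+1) → ℝ)) (hA : ContDiffOn ℝ (⊤ : ℕ∞) A M)
    (Q : (Fin n → ℝ) → ℝ) (hQ : ContDiffOn ℝ (⊤ : ℕ∞) Q M)
    (F : ((Fin n ⊕ Fin (n+1)) → ℝ) → ℝ)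
    (hF : ∀ z, F z = (∑ i : Fin (n+1), A (fun j => z (Sum.inl j)) i * z (Sum.inr i))
      + Q (fun j => z (Sum.inl j)))
    (V : (Fin n → ℝ) → ((Fin n ⊕ Fin (n+1)) → ℝ))
    (hV : ∀ u, V u = Sum.elim (0 : Fin n → ℝ) (fun i : Fin (n+1) => (-1 : ℝ) ^ (i : ℕ) * minorDel A i u)) :
    (∀ z : (Fin n ⊕ Fin (n+1)) → ℝ, (fun j => z (Sum.inl j)) ∈ M →
      hessM F z *ᵥ V (fun j => z (Sum.inl j)) = 0 ∧
      (hessM F z).adjugate = ((-1 : ℝ)^n) •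
        vecMulVec (V (fun j => z (Sum.inl j))) (V (fun j => z (Sum.inl j))) ∧
      Uval F z = (-1 : ℝ)^n * (AdA A (fun j => z (Sum.inl j)))^2) ∧
    ((∀ z : (Fin n ⊕ Fin (n+1)) → ℝ, (fun j => z (Sum.inl j)) ∈ M → Uval F z ≠ 0)
      ↔ (∀ u ∈ M, AdA A u ≠ 0)) :=
  stmt15_general n M hM A hA Q hQ F hF V hV
end
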